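/- arXiv:1210.4220 — 2 statements merged into one kernel-verified Lean document; each statement's English description precedes it below -/
import Mathlib

section
/- There exists a computable linear order <_A on ℕ that is order-isomorphic to (ℕ, <) such that every order isomorphism f from (ℕ, <_A) to (ℕ, <) Turing-computes the halting set ∅′ (i.e., ∅′ ≤_T f). -/
open Classical in
/-- The characteristic function (into `ℕ`) of a set of naturals, as a partial function,
to be used as an oracle. -/
noncomputable def setChar (X : Set ℕ) : ℕ →. ℕ :=
  fun n => Part.some (if n ∈ X then 1 else 0)

/-- Codes for oracle Turing machines (partial recursive functionals), following the
scheme of `Nat.Partrec.Code` with an extra `oracle` primitive. -/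
inductive OCode : Type
  | zero | succ | left | right | oracle
  | pair : OCode → OCode → OCode
  | comp : OCode → OCode → OCode
  | prec : OCode → OCode → OCode
  | rfind' : OCode → OCode

namespace OCode

/-- Evaluation of an oracle code with oracle `O`: the partial function computed by the
oracle machine `c` with oracle `O`. -/
def eval (O : ℕ →. ℕ) : OCode → ℕ →. ℕ
  | zero => pure 0
  | succ => fun n => Part.some (n + 1)
  | left => fun n => Part.some n.unpair.1
  | right => fun n => Part.some n.unpair.2
  | oracle => O
  | pair cf cg => fun n => Nat.pair <$> eval O cf n <*> eval O cg n
  | comp cf cg => fun n => eval O cg n >>= eval O cf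
  | prec cf cg =>
    Nat.unpaired fun a n =>
      n.rec (eval O cf a) fun y IH => do
        let i ← IH
        eval O cg (Nat.pair a (Nat.pair y i))
  | rfind' cf =>
    Nat.unpaired fun a m =>
      (Nat.rfind fun n => (fun m => m = 0) <$> eval O cf (Nat.pair a (n + m))).map (· + m)

/-- A canonical (injective) numbering of oracle codes. -/
def encode : OCode → ℕ
  | zero => 0
  | succ => 1
  | left => 2
  | right => 3
  | oracle => 4
  | pair cf cg => 4 * Nat.pair (encode cf) (encode cg) + 5
  | comp cf cg => 4 * Nat.pair (encode cf) (encode cg) + 6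
  | prec cf cg => 4 * Nat.pair (encode cf) (encode cg) + 7
  | rfind' cf => 4 * encode cf + 8

end OCode

/-- `f` is partial recursive in the oracle `O`. -/
def RecInO (O : ℕ →. ℕ) (f : ℕ →. ℕ) : Prop := ∃ c : OCode, c.eval O = f

/-- Turing reducibility between sets of naturals: `TLE A B` means `A ≤_T B`. -/
def TLE (A B : Set ℕ) : Prop := RecInO (setChar B) (setChar A)

/-- Turing equivalence between sets of naturals. -/
def TEquiv (A B : Set ℕ) : Prop := TLE A B ∧ TLE B A

/-- A total function is Turing reducible to a set: `f ≤_T X`. -/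
def FunTLE (f : ℕ → ℕ) (X : Set ℕ) : Prop :=
  RecInO (setChar X) (fun n => Part.some (f n))

/-- A set is Turing reducible to a total function used as an oracle: `X ≤_T f`. -/
def SetTLEFun (X : Set ℕ) (f : ℕ → ℕ) : Prop :=
  RecInO (fun n => Part.some (f n)) (setChar X)

/-- The Turing jump of a set `X`: the set of (codes of) oracle machines `e` that halt
on input `e` with oracle `X`. -/
def jump (X : Set ℕ) : Set ℕ :=
  {e | ∃ c : OCode, c.encode = e ∧ (c.eval (setChar X) e).Dom}

/-- The halting set `∅′`: the set of `e` such that the `e`-th partial computable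
function halts on input `e`. -/
def haltingSet : Set ℕ :=
  {e | ((Denumerable.ofNat Nat.Partrec.Code e).eval e).Dom}

/-- `X` is a computable set. -/
def IsComputableSet (X : Set ℕ) : Prop :=
  ∃ g : ℕ → Bool, Computable g ∧ ∀ n, n ∈ X ↔ g n = true



namespace HaltAux

open Nat.Partrec (Code)

/-- Does the `e`-th machine halt on `e` within `s` steps? -/
def haltsIn (e s : ℕ) : Bool :=
  (Nat.Partrec.Code.evaln s (Denumerable.ofNat Code e) e).isSome

lemma haltsIn_zero (e : ℕ) : haltsIn e 0 = false := by
  simp [haltsIn, Nat.Partrec.Code.evaln]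

lemma haltsIn_mono {e s t : ℕ} (h : s ≤ t) (hs : haltsIn e s = true) :
    haltsIn e t = true := by
  unfold haltsIn at *
  obtain ⟨x, hx⟩ := Option.isSome_iff_exists.1 hs
  exact Option.isSome_iff_exists.2 ⟨x, Nat.Partrec.Code.evaln_mono h hx⟩

lemma mem_haltingSet_iff (e : ℕ) :
    (((Denumerable.ofNat Code e).eval e).Dom) ↔ ∃ s, haltsIn e s = true := by
  rw [Part.dom_iff_mem]
  constructor
  · rintro ⟨x, hx⟩
    obtain ⟨k, hk⟩ := Nat.Partrec.Code.evaln_complete.1 hx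
    exact ⟨k, Option.isSome_iff_exists.2 ⟨x, hk⟩⟩
  · rintro ⟨s, hs⟩
    obtain ⟨x, hx⟩ := Option.isSome_iff_exists.1 hs
    exact ⟨x, Nat.Partrec.Code.evaln_complete.2 ⟨s, hx⟩⟩

/-- `n = ⟨e, s⟩` is a *witness* if machine `e` halts on `e` in exactly `s` steps. -/
def wit (n : ℕ) : Bool :=
  haltsIn n.unpair.1 n.unpair.2 && !haltsIn n.unpair.1 (n.unpair.2 - 1)

lemma wit_unique {e s t : ℕ} (hs : wit (Nat.pair e s) = true)
    (ht : wit (Nat.pair e t) = true) : s = t := by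
  simp only [wit, Nat.unpair_pair, Bool.and_eq_true, Bool.not_eq_true'] at hs ht
  by_contra hne
  rcases Nat.lt_or_ge s t with h | h
  · have := haltsIn_mono (Nat.le_sub_one_of_lt h) hs.1
    rw [ht.2] at this; exact absurd this (by simp)
  · have hlt : t < s := lt_of_le_of_ne h (Ne.symm hne)
    have := haltsIn_mono (Nat.le_sub_one_of_lt hlt) ht.1
    rw [hs.2] at this; exact absurd this (by simp)

lemma mem_iff_wit (e : ℕ) :
    (((Denumerable.ofNat Code e).eval e).Dom) ↔ ∃ s, wit (Nat.pair e s) = true := by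
  rw [mem_haltingSet_iff]
  constructor
  · intro h
    have h' : ∃ s, haltsIn e s = true := h
    refine ⟨Nat.find h', ?_⟩
    have h1 := Nat.find_spec h'
    have h0 : Nat.find h' ≠ 0 := by
      intro h0; rw [h0] at h1; simp [haltsIn_zero] at h1
    have h2 : haltsIn e (Nat.find h' - 1) = false := by
      by_contra hcon
      exact Nat.find_min h' (show Nat.find h' - 1 < Nat.find h' by omega)
        (by simpa using hcon)
    simp [wit, Nat.unpair_pair, h1, h2]
  · rintro ⟨s, hs⟩
    simp only [wit, Nat.unpair_pair, Bool.and_eq_true] at hs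
    exact ⟨s, hs.1⟩

def junk (n : ℕ) : Bool := !(n.unpair.2 == 0) && !wit n

/-- The "address" of `n` in the constructed order. -/
def L (n : ℕ) : ℕ :=
  if n.unpair.2 = 0 then 4 * n.unpair.1
  else if wit n = true then 4 * n.unpair.1 + 2
  else 4 * n + 3

lemma L_pair_zero (e : ℕ) : L (Nat.pair e 0) = 4 * e := by
  simp [L, Nat.unpair_pair]

lemma L_cases (m : ℕ) :
    (m = Nat.pair m.unpair.1 0 ∧ L m = 4 * m.unpair.1) ∨
    (wit m = true ∧ L m = 4 * m.unpair.1 + 2) ∨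
    (junk m = true ∧ L m = 4 * m + 3) := by
  by_cases h0 : m.unpair.2 = 0
  · left
    constructor
    · conv_lhs => rw [← Nat.pair_unpair m]
      rw [h0]
    · simp [L, h0]
  · by_cases hw : wit m = true
    · right; left; exact ⟨hw, by simp [L, h0, hw]⟩
    · right; right
      refine ⟨?_, by simp [L, h0, hw]⟩
      simp [junk, h0, hw]

lemma L_inj : Function.Injective L := by
  intro a b h
  rcases L_cases a with ⟨ha1, ha2⟩ | ⟨ha1, ha2⟩ | ⟨ha1, ha2⟩ <;>
    rcases L_cases b with ⟨hb1, hb2⟩ | ⟨hb1, hb2⟩ | ⟨hb1, hb2⟩ <;>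
    rw [ha2, hb2] at h
  · have : a.unpair.1 = b.unpair.1 := by omega
    rw [ha1, hb1, this]
  · omega
  · omega
  · omega
  · have he : a.unpair.1 = b.unpair.1 := by omega
    have ha' : a = Nat.pair a.unpair.1 a.unpair.2 := (Nat.pair_unpair a).symm
    have hb' : b = Nat.pair b.unpair.1 b.unpair.2 := (Nat.pair_unpair b).symm
    have : a.unpair.2 = b.unpair.2 := by
      apply wit_unique (e := a.unpair.1)
      · rwa [← ha']
      · rw [he]; rwa [← hb']
    rw [ha', hb', he, this]
  · omega
  · omega
  · omega
  · omega

lemma ex_L_four (e : ℕ) : ∃ m, L m = 4 * e := ⟨Nat.pair e 0, L_pair_zero e⟩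

lemma not_ex_L_four_one (e : ℕ) : ¬ ∃ m, L m = 4 * e + 1 := by
  rintro ⟨m, hm⟩
  rcases L_cases m with ⟨_, h⟩ | ⟨_, h⟩ | ⟨_, h⟩ <;> omega

lemma ex_L_four_two (e : ℕ) :
    (∃ m, L m = 4 * e + 2) ↔ ∃ s, wit (Nat.pair e s) = true := by
  constructor
  · rintro ⟨m, hm⟩
    rcases L_cases m with ⟨_, h⟩ | ⟨hw, h⟩ | ⟨_, h⟩
    · omega
    · have he : m.unpair.1 = e := by omega
      refine ⟨m.unpair.2, ?_⟩
      rw [← he, Nat.pair_unpair m]; exact hw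
    · omega
  · rintro ⟨s, hs⟩
    have hs0 : s ≠ 0 := by
      intro h0
      rw [h0] at hs
      simp [wit, Nat.unpair_pair, haltsIn_zero] at hs
    exact ⟨Nat.pair e s, by simp [L, Nat.unpair_pair, hs0, hs]⟩

lemma ex_L_four_three (e : ℕ) : (∃ m, L m = 4 * e + 3) ↔ junk e = true := by
  constructor
  · rintro ⟨m, hm⟩
    rcases L_cases m with ⟨_, h⟩ | ⟨_, h⟩ | ⟨hj, h⟩
    · omega
    · omega
    · have : m = e := by omega
      rwa [← this]
  · intro hj
    refine ⟨e, ?_⟩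
    simp only [junk, Bool.and_eq_true, Bool.not_eq_true', beq_eq_false_iff_ne,
      ne_eq] at hj
    simp [L, hj.1, hj.2]


section Primrec

open Primrec

lemma primrec_haltsIn : Primrec₂ haltsIn := by
  have h1 : Primrec fun p : ℕ × ℕ =>
      ((p.2, Denumerable.ofNat Code p.1), p.1) :=
    (Primrec.snd.pair ((Primrec.ofNat Code).comp Primrec.fst)).pair Primrec.fst
  exact (Primrec.option_isSome.comp
    (Nat.Partrec.Code.primrec_evaln.comp h1)).of_eq fun p => rfl

lemma primrec_u1 : Primrec fun n : ℕ => n.unpair.1 :=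
  Primrec.fst.comp Primrec.unpair

lemma primrec_u2 : Primrec fun n : ℕ => n.unpair.2 :=
  Primrec.snd.comp Primrec.unpair

lemma primrec_wit : Primrec wit := by
  have a : Primrec fun n : ℕ => haltsIn n.unpair.1 n.unpair.2 :=
    primrec_haltsIn.comp primrec_u1 primrec_u2
  have b : Primrec fun n : ℕ => !haltsIn n.unpair.1 (n.unpair.2 - 1) :=
    Primrec.not.comp (primrec_haltsIn.comp primrec_u1
      (Primrec.nat_sub.comp primrec_u2 (Primrec.const 1)))
  exact (Primrec.and.comp a b).of_eq fun n => rfl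

lemma primrec_junk : Primrec junk := by
  have a : Primrec fun n : ℕ => !(n.unpair.2 == 0) :=
    Primrec.not.comp (Primrec.beq.comp primrec_u2 (Primrec.const 0))
  exact (Primrec.and.comp a (Primrec.not.comp primrec_wit)).of_eq fun n => rfl

lemma primrec_L : Primrec L := by
  have c1 : PrimrecPred fun n : ℕ => n.unpair.2 = 0 :=
    PrimrecRel.comp Primrec.eq primrec_u2 (Primrec.const 0)
  have c2 : PrimrecPred fun n : ℕ => wit n = true :=
    PrimrecRel.comp Primrec.eq primrec_wit (Primrec.const true)
  have f1 : Primrec fun n : ℕ => 4 * n.unpair.1 :=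
    Primrec.nat_mul.comp (Primrec.const 4) primrec_u1
  have f2 : Primrec fun n : ℕ => 4 * n.unpair.1 + 2 :=
    Primrec.nat_add.comp f1 (Primrec.const 2)
  have f3 : Primrec fun n : ℕ => 4 * n + 3 :=
    Primrec.nat_add.comp (Primrec.nat_mul.comp (Primrec.const 4) Primrec.id)
      (Primrec.const 3)
  exact Primrec.ite c1 f1 (Primrec.ite c2 f2 f3)

/-- The decoding function that recovers halting from the values of the
isomorphism at consecutive markers. -/
def u (m : ℕ) : ℕ :=
  if m.unpair.2.unpair.1 + 2 + (cond (junk m.unpair.2.unpair.2) 1 0)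
      ≤ m.unpair.1 then 1 else 0

lemma primrec_u : Primrec u := by
  have u21 : Primrec fun m : ℕ => m.unpair.2.unpair.1 := primrec_u1.comp primrec_u2
  have u22 : Primrec fun m : ℕ => m.unpair.2.unpair.2 := primrec_u2.comp primrec_u2
  have hc : Primrec fun m : ℕ => (cond (junk m.unpair.2.unpair.2) 1 0 : ℕ) :=
    Primrec.cond (primrec_junk.comp u22) (Primrec.const 1) (Primrec.const 0)
  have hsum : Primrec fun m : ℕ =>
      m.unpair.2.unpair.1 + 2 + (cond (junk m.unpair.2.unpair.2) 1 0 : ℕ) :=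
    Primrec.nat_add.comp (Primrec.nat_add.comp u21 (Primrec.const 2)) hc
  exact Primrec.ite (PrimrecRel.comp Primrec.nat_le hsum primrec_u1)
    (Primrec.const 1) (Primrec.const 0)

lemma primrec_v1 : Primrec fun n : ℕ => Nat.pair (n + 1) 0 :=
  Primrec₂.comp Primrec₂.natPair Primrec.succ (Primrec.const 0)

lemma primrec_v2 : Primrec fun n : ℕ => Nat.pair n 0 :=
  Primrec₂.comp Primrec₂.natPair Primrec.id (Primrec.const 0)

end Primrec

open Classical in
/-- The canonical isomorphism: `n` goes to the number of elements below it. -/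
noncomputable def gfun (n : ℕ) : ℕ :=
  Nat.count (fun k => ∃ m, L m = k) (L n)

open Classical in
lemma gfun_lt_iff (a b : ℕ) : L a < L b ↔ gfun a < gfun b := by
  constructor
  · intro h
    exact Nat.count_strict_mono ⟨a, rfl⟩ h
  · intro h
    by_contra hcon
    exact absurd (Nat.count_monotone _ (Nat.le_of_not_lt hcon)) (Nat.not_le.2 h)

lemma gfun_bijective : Function.Bijective gfun := by
  classical
  constructor
  · intro a b hab
    apply L_inj
    rcases Nat.lt_trichotomy (L a) (L b) with h | h | h
    · exact absurd ((gfun_lt_iff a b).1 h) (by omega)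
    · exact h
    · exact absurd ((gfun_lt_iff b a).1 h) (by omega)
  · intro k
    have hinf : {k | ∃ m, L m = k}.Infinite := by
      have := Set.infinite_range_of_injective L_inj
      exact this
    have hp : ∃ m, L m = Nat.nth (fun k => ∃ m, L m = k) k :=
      Nat.nth_mem_of_infinite hinf k
    obtain ⟨m, hm⟩ := hp
    refine ⟨m, ?_⟩
    show Nat.count _ (L m) = k
    rw [hm]
    exact Nat.count_nth_of_infinite hinf k

open Classical in
lemma gfun_step (e : ℕ) :
    gfun (Nat.pair (e + 1) 0) = gfun (Nat.pair e 0) + 1 +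
      (if ((Denumerable.ofNat Code e).eval e).Dom then 1 else 0) +
      (cond (junk e) 1 0) := by
  show Nat.count _ (L (Nat.pair (e+1) 0)) = Nat.count _ (L (Nat.pair e 0)) + _ + _ + _
  rw [L_pair_zero, L_pair_zero]
  have h4 : 4 * (e + 1) = (4 * e + 1 + 1 + 1) + 1 := by ring
  rw [h4, Nat.count_succ, Nat.count_succ, Nat.count_succ, Nat.count_succ]
  rw [if_pos (ex_L_four e), if_neg (not_ex_L_four_one e)]
  have h2 : (∃ m, L m = 4 * e + 2) ↔ (((Denumerable.ofNat Code e).eval e).Dom) := by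
    rw [ex_L_four_two, ← mem_iff_wit]
  by_cases hK : ((Denumerable.ofNat Code e).eval e).Dom
  · rw [if_pos (h2.2 hK), if_pos hK]
    by_cases hJ : junk e = true
    · rw [if_pos ((ex_L_four_three e).2 hJ), hJ]
      simp only [cond_true]
    · rw [if_neg (fun hc => hJ ((ex_L_four_three e).1 hc))]
      simp only [Bool.not_eq_true] at hJ
      rw [hJ]
      simp only [cond_false]
  · rw [if_neg (fun hc => hK (h2.1 hc)), if_neg hK]
    by_cases hJ : junk e = true
    · rw [if_pos ((ex_L_four_three e).2 hJ), hJ]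
      simp only [cond_true]
    · rw [if_neg (fun hc => hJ ((ex_L_four_three e).1 hc))]
      simp only [Bool.not_eq_true] at hJ
      rw [hJ]
      simp only [cond_false]

/-- Uniqueness of the isomorphism to `(ℕ, <)`. -/
lemma iso_unique {f g : ℕ → ℕ} (hf : Function.Bijective f) (hg : Function.Bijective g)
    (hf' : ∀ a b, L a < L b ↔ f a < f b) (hg' : ∀ a b, L a < L b ↔ g a < g b) :
    f = g := by
  let e1 := Equiv.ofBijective f hf
  let e2 := Equiv.ofBijective g hg
  let h := e1.symm.trans e2
  have hmono : StrictMono h := by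
    intro x y hxy
    have hx : f (e1.symm x) = x := Equiv.ofBijective_apply_symm_apply f hf x
    have hy : f (e1.symm y) = y := Equiv.ofBijective_apply_symm_apply f hf y
    have : f (e1.symm x) < f (e1.symm y) := by rw [hx, hy]; exact hxy
    exact (hg' _ _).1 ((hf' _ _).2 this)
  have hmono' : StrictMono (h.symm : ℕ → ℕ) := by
    intro x y hxy
    by_contra hcon
    have hle : h.symm y ≤ h.symm x := Nat.le_of_not_lt hcon
    have : y ≤ x := by
      have := hmono.monotone hle
      simpa [h.apply_symm_apply] using this
    omega
  have hid : ∀ x, h x = x := by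
    intro x
    have h1 : x ≤ h x := hmono.le_apply
    have h2 : h x ≤ h.symm (h x) := hmono'.le_apply
    rw [h.symm_apply_apply] at h2
    omega
  funext a
  have : h (f a) = g a := by
    show e2 (e1.symm (f a)) = g a
    have : e1.symm (f a) = a := Equiv.ofBijective_symm_apply_apply f hf a
    rw [this]; rfl
  rw [← this, hid]

end HaltAux

namespace HaltAux

/-- Translation of ordinary codes into oracle codes. -/
def ofCode : Nat.Partrec.Code → OCode
  | Nat.Partrec.Code.zero => OCode.zero
  | Nat.Partrec.Code.succ => OCode.succ
  | Nat.Partrec.Code.left => OCode.left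
  | Nat.Partrec.Code.right => OCode.right
  | Nat.Partrec.Code.pair cf cg => OCode.pair (ofCode cf) (ofCode cg)
  | Nat.Partrec.Code.comp cf cg => OCode.comp (ofCode cf) (ofCode cg)
  | Nat.Partrec.Code.prec cf cg => OCode.prec (ofCode cf) (ofCode cg)
  | Nat.Partrec.Code.rfind' cf => OCode.rfind' (ofCode cf)

lemma eval_ofCode (O : ℕ →. ℕ) :
    ∀ c : Nat.Partrec.Code, (ofCode c).eval O = c.eval := by
  intro c
  induction c with
  | zero => rfl
  | succ => rfl
  | left => rfl
  | right => rfl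
  | pair cf cg ihf ihg =>
      simp [ofCode, OCode.eval, Nat.Partrec.Code.eval, ihf, ihg]; rfl
  | comp cf cg ihf ihg =>
      simp [ofCode, OCode.eval, Nat.Partrec.Code.eval, ihf, ihg]; rfl
  | prec cf cg ihf ihg =>
      simp [ofCode, OCode.eval, Nat.Partrec.Code.eval, ihf, ihg]; rfl
  | rfind' cf ihf =>
      simp [ofCode, OCode.eval, Nat.Partrec.Code.eval, ihf]; rfl

end HaltAux

/-- There is a computable linear order on ℕ, order-isomorphic to `(ℕ, <)`, such that
every order isomorphism from it to `(ℕ, <)` Turing-computes the halting set `∅′`. -/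
theorem exists_computable_order_iso_nat_all_isos_compute_halting :
    ∃ (r : ℕ → ℕ → Prop) (R : ℕ → ℕ → Bool),
      Computable₂ R ∧ (∀ a b, r a b ↔ R a b = true) ∧
      IsStrictTotalOrder ℕ r ∧
      (∃ g : ℕ → ℕ, Function.Bijective g ∧ ∀ a b, r a b ↔ g a < g b) ∧
      ∀ f : ℕ → ℕ, Function.Bijective f → (∀ a b, r a b ↔ f a < f b) →
        SetTLEFun haltingSet f := by
  classical
  refine ⟨fun a b => HaltAux.L a < HaltAux.L b,
    fun a b => decide (HaltAux.L a < HaltAux.L b), ?_, ?_, ?_, ?_, ?_⟩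
  · -- computability of the order
    have hp : Primrec fun p : ℕ × ℕ => decide (HaltAux.L p.1 < HaltAux.L p.2) :=
      PrimrecPred.decide (PrimrecRel.comp Primrec.nat_lt (HaltAux.primrec_L.comp Primrec.fst)
        (HaltAux.primrec_L.comp Primrec.snd))
    exact Primrec₂.to_comp hp
  · intro a b; simp
  · exact
      { trichotomous := fun a b => by
          rcases Nat.lt_trichotomy (HaltAux.L a) (HaltAux.L b) with h | h | h
          · exact fun h1 _ => absurd h h1
          · exact fun _ _ => HaltAux.L_inj h
          · exact fun _ h2 => absurd h h2
        irrefl := fun a => lt_irrefl _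
        trans := fun a b c hab hbc => lt_trans hab hbc }
  · exact ⟨HaltAux.gfun, HaltAux.gfun_bijective, HaltAux.gfun_lt_iff⟩
  · intro f hbij hpres
    have hfg : f = HaltAux.gfun :=
      HaltAux.iso_unique hbij HaltAux.gfun_bijective hpres HaltAux.gfun_lt_iff
    obtain ⟨cu, hcu⟩ := Nat.Partrec.Code.exists_code.1
      (Partrec.nat_iff.1 HaltAux.primrec_u.to_comp)
    obtain ⟨c1, hc1⟩ := Nat.Partrec.Code.exists_code.1
      (Partrec.nat_iff.1 HaltAux.primrec_v1.to_comp)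
    obtain ⟨c2, hc2⟩ := Nat.Partrec.Code.exists_code.1
      (Partrec.nat_iff.1 HaltAux.primrec_v2.to_comp)
    set O : ℕ →. ℕ := fun k => Part.some (f k) with hO
    refine ⟨OCode.comp (HaltAux.ofCode cu)
      (OCode.pair (OCode.comp OCode.oracle (HaltAux.ofCode c1))
        (OCode.pair (OCode.comp OCode.oracle (HaltAux.ofCode c2))
          (OCode.pair OCode.left OCode.right))), ?_⟩
    funext n
    have eA : OCode.eval O (OCode.comp OCode.oracle (HaltAux.ofCode c1)) n =
        Part.some (f (Nat.pair (n + 1) 0)) := by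
      show OCode.eval O (HaltAux.ofCode c1) n >>= OCode.eval O OCode.oracle = _
      rw [HaltAux.eval_ofCode, hc1]
      simp [OCode.eval, hO, PFun.coe_val]
    have eB : OCode.eval O (OCode.comp OCode.oracle (HaltAux.ofCode c2)) n =
        Part.some (f (Nat.pair n 0)) := by
      show OCode.eval O (HaltAux.ofCode c2) n >>= OCode.eval O OCode.oracle = _
      rw [HaltAux.eval_ofCode, hc2]
      simp [OCode.eval, hO, PFun.coe_val]
    have eC : OCode.eval O (OCode.pair OCode.left OCode.right) n = Part.some n := by
      show Nat.pair <$> OCode.eval O OCode.left n <*> OCode.eval O OCode.right n = _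
      simp [OCode.eval, Seq.seq]
    set z : ℕ := Nat.pair (f (Nat.pair (n + 1) 0)) (Nat.pair (f (Nat.pair n 0)) n) with hz
    have eP : OCode.eval O
        (OCode.pair (OCode.comp OCode.oracle (HaltAux.ofCode c1))
          (OCode.pair (OCode.comp OCode.oracle (HaltAux.ofCode c2))
            (OCode.pair OCode.left OCode.right))) n = Part.some z := by
      show Nat.pair <$> OCode.eval O (OCode.comp OCode.oracle (HaltAux.ofCode c1)) n <*>
          (Nat.pair <$> OCode.eval O (OCode.comp OCode.oracle (HaltAux.ofCode c2)) n <*>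
            OCode.eval O (OCode.pair OCode.left OCode.right) n) = _
      rw [eA, eB, eC]
      simp [Seq.seq, hz]
    have eAll : OCode.eval O (OCode.comp (HaltAux.ofCode cu)
        (OCode.pair (OCode.comp OCode.oracle (HaltAux.ofCode c1))
          (OCode.pair (OCode.comp OCode.oracle (HaltAux.ofCode c2))
            (OCode.pair OCode.left OCode.right)))) n = Part.some (HaltAux.u z) := by
      show _ >>= OCode.eval O (HaltAux.ofCode cu) = _
      rw [eP, HaltAux.eval_ofCode, hcu]
      exact Part.bind_some z (HaltAux.u : ℕ →. ℕ)
    rw [eAll]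
    -- now the arithmetic of the decoding
    have harith : HaltAux.gfun (Nat.pair (n + 1) 0) = HaltAux.gfun (Nat.pair n 0) + 1 +
        (if ((Denumerable.ofNat Nat.Partrec.Code n).eval n).Dom then 1 else 0) +
        (cond (HaltAux.junk n) 1 0) := HaltAux.gfun_step n
    have hval : HaltAux.u z = if n ∈ haltingSet then 1 else 0 := by
      have hmem : (n ∈ haltingSet) ↔ ((Denumerable.ofNat Nat.Partrec.Code n).eval n).Dom :=
        Iff.rfl
      unfold HaltAux.u
      rw [hz]
      simp only [Nat.unpair_pair]
      rw [hfg] at *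
      by_cases hK : ((Denumerable.ofNat Nat.Partrec.Code n).eval n).Dom
      · rw [if_pos hK] at harith
        rw [if_pos (hmem.2 hK), if_pos (by omega)]
      · rw [if_neg hK] at harith
        rw [if_neg (fun hc => hK (hmem.1 hc)), if_neg (by omega)]
    rw [hval]
    show _ = setChar haltingSet n
    unfold setChar
    by_cases hK : n ∈ haltingSet
    · rw [if_pos hK]
    · rw [if_neg hK]
end

section
/- Let 𝒜 and ℬ be isomorphic computable structures, and suppose f is an isomorphism from 𝒜 to ℬ such that both f and f⁻¹ are dominated by a computable function h (i.e., f(n) ≤ h(n) and f⁻¹(n) ≤ h(n) for all n). Then there exists an isomorphism g from 𝒜 to ℬ with g ≤_T ∅′. -/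
/-- A countable first-order language, presented by listings of its function and
relation symbols with their arities (`funcArity i = some k` means that the `i`-th
function symbol exists and has arity `k`).  The language is computable: the arity
functions are computable. -/
structure CompLanguage : Type where
  funcArity : ℕ → Option ℕ
  relArity : ℕ → Option ℕ
  funcArity_computable : Computable funcArity
  relArity_computable : Computable relArity

/-- A first-order structure with domain a subset of ℕ for the language `L`.
Function symbol `i` is interpreted by `funcs i` acting on tuples (given as lists of
the appropriate length), and relation symbol `i` by `rels i`. -/
structure Struc (L : CompLanguage) : Type where
  dom : Set ℕ
  funcs : ℕ → List ℕ → ℕ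
  rels : ℕ → List ℕ → Prop

/-- A computable structure: its domain is ℕ or an initial segment of ℕ, and its
atomic diagram is computable (relations uniformly decidable, functions uniformly
computable). -/
structure CompStruc (L : CompLanguage) extends Struc L : Type where
  dom_initial : ∀ m n : ℕ, m ≤ n → n ∈ dom → m ∈ dom
  dom_computable : ∃ d : ℕ → Bool, Computable d ∧ ∀ n, n ∈ dom ↔ d n = true
  funcs_closed : ∀ i k, L.funcArity i = some k → ∀ xs : List ℕ, xs.length = k →
    (∀ x ∈ xs, x ∈ dom) → funcs i xs ∈ dom
  funcs_computable : Computable₂ funcs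
  rels_computable : ∃ r : ℕ → List ℕ → Bool, Computable₂ r ∧
    ∀ i xs, rels i xs ↔ r i xs = true

/-- `f` (restricted to the domain of `A`) is an isomorphism from `A` to `B`:
a bijection of the domains preserving all functions and relations in both
directions. -/
structure IsIsom {L : CompLanguage} (A B : Struc L) (f : ℕ → ℕ) : Prop where
  bijOn : Set.BijOn f A.dom B.dom
  map_funcs : ∀ i k, L.funcArity i = some k → ∀ xs : List ℕ, xs.length = k →
    (∀ x ∈ xs, x ∈ A.dom) → f (A.funcs i xs) = B.funcs i (xs.map f)
  map_rels : ∀ i k, L.relArity i = some k → ∀ xs : List ℕ, xs.length = k →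
    (∀ x ∈ xs, x ∈ A.dom) → (A.rels i xs ↔ B.rels i (xs.map f))

/-- The computable structure `A` is `X`-computably categorical: every computable
structure isomorphic to `A` is isomorphic to it via an `X`-computable isomorphism. -/
def XCompCategorical {L : CompLanguage} (A : CompStruc L) (X : Set ℕ) : Prop :=
  ∀ B : CompStruc L, (∃ f : ℕ → ℕ, IsIsom B.toStruc A.toStruc f) →
    ∃ f : ℕ → ℕ, IsIsom B.toStruc A.toStruc f ∧ FunTLE f X

/-- The Turing degree of the set `X` is a degree of categoricity: some computable
structure `A` is `X`-computably categorical, and whenever `A` is `Y`-computably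
categorical we have `X ≤_T Y`. -/
def IsDegreeOfCategoricity (X : Set ℕ) : Prop :=
  ∃ (L : CompLanguage) (A : CompStruc L), XCompCategorical A X ∧
    ∀ Y : Set ℕ, XCompCategorical A Y → TLE X Y

-- ===== Part 1: oracle computability machinery =====

namespace RecInO

open Nat.Partrec (Code)

/-- Translate a plain code into an oracle code. -/
def toOCode : Nat.Partrec.Code → OCode
  | Nat.Partrec.Code.zero => OCode.zero
  | Nat.Partrec.Code.succ => OCode.succ
  | Nat.Partrec.Code.left => OCode.left
  | Nat.Partrec.Code.right => OCode.right
  | Nat.Partrec.Code.pair cf cg => OCode.pair (toOCode cf) (toOCode cg)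
  | Nat.Partrec.Code.comp cf cg => OCode.comp (toOCode cf) (toOCode cg)
  | Nat.Partrec.Code.prec cf cg => OCode.prec (toOCode cf) (toOCode cg)
  | Nat.Partrec.Code.rfind' cf => OCode.rfind' (toOCode cf)

theorem eval_toOCode (O : ℕ →. ℕ) (c : Nat.Partrec.Code) :
    OCode.eval O (toOCode c) = c.eval := by
  induction c <;> simp [toOCode, OCode.eval, Nat.Partrec.Code.eval, PFun.coe_val, *] <;> rfl

theorem of_partrec {O : ℕ →. ℕ} {f : ℕ →. ℕ} (hf : Nat.Partrec f) : RecInO O f := by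
  obtain ⟨c, hc⟩ := Nat.Partrec.Code.exists_code.1 hf
  exact ⟨toOCode c, by rw [eval_toOCode, hc]⟩

theorem of_computable {O : ℕ →. ℕ} {f : ℕ → ℕ} (hf : Computable f) :
    RecInO O (fun n => Part.some (f n)) := by
  have := of_partrec (O := O) (Partrec.nat_iff.1 hf)
  exact this

theorem oracle {O : ℕ →. ℕ} : RecInO O O := ⟨OCode.oracle, rfl⟩

theorem comp {O : ℕ →. ℕ} {f g : ℕ →. ℕ} (hf : RecInO O f) (hg : RecInO O g) :
    RecInO O (fun n => g n >>= f) := by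
  obtain ⟨cf, rfl⟩ := hf; obtain ⟨cg, rfl⟩ := hg
  exact ⟨OCode.comp cf cg, rfl⟩

theorem pair {O : ℕ →. ℕ} {f g : ℕ →. ℕ} (hf : RecInO O f) (hg : RecInO O g) :
    RecInO O (fun n => Nat.pair <$> f n <*> g n) := by
  obtain ⟨cf, rfl⟩ := hf; obtain ⟨cg, rfl⟩ := hg
  exact ⟨OCode.pair cf cg, rfl⟩

theorem prec {O : ℕ →. ℕ} {f g : ℕ →. ℕ} (hf : RecInO O f) (hg : RecInO O g) :
    RecInO O (Nat.unpaired fun a n =>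
      n.rec (f a) fun y IH => do let i ← IH; g (Nat.pair a (Nat.pair y i))) := by
  obtain ⟨cf, rfl⟩ := hf; obtain ⟨cg, rfl⟩ := hg
  exact ⟨OCode.prec cf cg, rfl⟩

theorem of_eq {O : ℕ →. ℕ} {f g : ℕ →. ℕ} (hf : RecInO O f) (H : ∀ n, f n = g n) : RecInO O g :=
  (funext H : f = g) ▸ hf

/-- Composition of total functions. -/
theorem totalComp {O : ℕ →. ℕ} {f g : ℕ → ℕ}
    (hf : RecInO O (fun n => Part.some (f n))) (hg : RecInO O (fun n => Part.some (g n))) :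
    RecInO O (fun n => Part.some (f (g n))) :=
  (comp hf hg).of_eq fun n => by simp

/-- Oracle composed with a computable total function. -/
theorem oracleComp {O : ℕ → ℕ} {g : ℕ → ℕ} (hg : Computable g) :
    RecInO (fun n => Part.some (O n)) (fun n => Part.some (O (g n))) :=
  (comp oracle (of_computable hg)).of_eq fun n => by simp

end RecInO
-- ===== Part 2: bounded quantifiers and Σ1 reduction =====

/-- Bounded forall as a Bool, by recursion. -/
def ballB (N : ℕ) (q : ℕ → Bool) : Bool :=
  Nat.rec true (fun i acc => acc && q i) N

/-- Bounded exists as a Bool, by recursion. -/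
def bexB (N : ℕ) (q : ℕ → Bool) : Bool :=
  Nat.rec false (fun i acc => acc || q i) N

theorem ballB_iff {N q} : ballB N q = true ↔ ∀ i < N, q i = true := by
  induction N with
  | zero => simp [ballB]
  | succ n ih =>
    simp only [ballB, Bool.and_eq_true] at *
    constructor
    · rintro ⟨h1, h2⟩ i hi
      rcases Nat.lt_succ_iff_lt_or_eq.1 hi with hi | rfl
      · exact ih.1 h1 i hi
      · exact h2
    · intro H
      exact ⟨ih.2 fun i hi => H i (Nat.lt_succ_of_lt hi), H n (Nat.lt_succ_self n)⟩

theorem bexB_iff {N q} : bexB N q = true ↔ ∃ i < N, q i = true := by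
  induction N with
  | zero => simp [bexB]
  | succ n ih =>
    simp only [bexB, Bool.or_eq_true] at *
    constructor
    · rintro (h1 | h2)
      · obtain ⟨i, hi, h⟩ := ih.1 h1
        exact ⟨i, Nat.lt_succ_of_lt hi, h⟩
      · exact ⟨n, Nat.lt_succ_self n, h2⟩
    · rintro ⟨i, hi, h⟩
      rcases Nat.lt_succ_iff_lt_or_eq.1 hi with hi | rfl
      · exact Or.inl (ih.2 ⟨i, hi, h⟩)
      · exact Or.inr h

theorem Computable.ballB {α} [Primcodable α] {N : α → ℕ} {q : α → ℕ → Bool}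
    (hN : Computable N) (hq : Computable₂ q) :
    Computable fun a => ballB (N a) (q a) := by
  have hstep : Computable₂ fun (a : α) (p : ℕ × Bool) => p.2 && q a p.1 := by
    have := Computable.cond (α := α × (ℕ × Bool))
      (c := fun x => x.2.2) (f := fun x => q x.1 x.2.1) (g := fun _ => false)
      (Computable.snd.comp Computable.snd)
      (hq.comp Computable.fst (Computable.fst.comp Computable.snd)) (Computable.const false)
    have h2 : Computable fun (x : α × (ℕ × Bool)) => x.2.2 && q x.1 x.2.1 :=
      this.of_eq fun p => by cases h : p.2.2 <;> simp [h]
    exact h2.to₂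
  exact (Computable.nat_rec hN (Computable.const true) hstep).of_eq fun a => by
    simp only [_root_.ballB]

theorem Computable.bexB {α} [Primcodable α] {N : α → ℕ} {q : α → ℕ → Bool}
    (hN : Computable N) (hq : Computable₂ q) :
    Computable fun a => bexB (N a) (q a) := by
  have hstep : Computable₂ fun (a : α) (p : ℕ × Bool) => p.2 || q a p.1 := by
    have := Computable.cond (α := α × (ℕ × Bool))
      (c := fun x => x.2.2) (f := fun _ => true) (g := fun x => q x.1 x.2.1)
      (Computable.snd.comp Computable.snd)
      (Computable.const true) (hq.comp Computable.fst (Computable.fst.comp Computable.snd))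
    have h2 : Computable fun (x : α × (ℕ × Bool)) => x.2.2 || q x.1 x.2.1 :=
      this.of_eq fun p => by cases h : p.2.2 <;> simp [h]
    exact h2.to₂
  exact (Computable.nat_rec hN (Computable.const false) hstep).of_eq fun a => by
    simp only [_root_.bexB]

/-- Σ1 predicates reduce to the halting set. -/
theorem sigma_le_halting {pb : ℕ → ℕ → Bool} (hpb : Computable₂ pb) :
    ∃ k : ℕ → ℕ, Computable k ∧ ∀ n, ((∃ m, pb n m = true) ↔ k n ∈ haltingSet) := by
  have hψ : Nat.Partrec fun x => Nat.rfind ((fun m => pb x.unpair.1 m : ℕ → Bool) : ℕ →. Bool) := by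
    have : Partrec fun x : ℕ => Nat.rfind ((fun m => pb x.unpair.1 m : ℕ → Bool) : ℕ →. Bool) := by
      apply Partrec.rfind (p := fun (x : ℕ) => ((fun m => pb x.unpair.1 m : ℕ → Bool) : ℕ →. Bool))
      exact Computable₂.partrec₂
        (hpb.comp (Computable.fst.comp (Computable.unpair.comp Computable.fst)) Computable.snd)
    exact Partrec.nat_iff.1 this
  obtain ⟨c, hc⟩ := Nat.Partrec.Code.exists_code.1 hψ
  refine ⟨fun n => Encodable.encode (c.curry n), ?_, ?_⟩
  · exact Primrec.to_comp <| Primrec.encode.comp <|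
      Nat.Partrec.Code.primrec₂_curry.comp (Primrec.const c) Primrec.id
  · intro n
    have h1 : Denumerable.ofNat Nat.Partrec.Code (Encodable.encode (c.curry n)) = c.curry n :=
      Denumerable.ofNat_encode _
    unfold haltingSet
    simp only [Set.mem_setOf_eq, h1, Nat.Partrec.Code.eval_curry, hc]
    rw [Nat.unpair_pair]
    rw [Nat.rfind_dom]
    constructor
    · rintro ⟨m, hm⟩
      exact ⟨m, by simpa using hm, fun {_k} _hk => trivial⟩
    · rintro ⟨m, hm, -⟩
      exact ⟨m, by simpa using hm⟩
-- ===== Part 3: the tree of finite partial isomorphisms =====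

theorem Nat.pair_mono {a a' b b' : ℕ} (ha : a ≤ a') (hb : b ≤ b') :
    Nat.pair a b ≤ Nat.pair a' b' := by
  unfold Nat.pair
  split <;> split <;> nlinarith

/-- Boolean implication. -/
def implB (x y : Bool) : Bool := !x || y

theorem implB_iff {x y : Bool} : implB x y = true ↔ (x = true → y = true) := by
  cases x <;> cases y <;> simp [implB]

/-- Bound on codes of lists of length `≤ k` with entries `≤ n`. -/
def betaB (n : ℕ) : ℕ → ℕ
  | 0 => 0
  | k+1 => Nat.pair n (betaB n k) + 1

theorem encode_le_betaB : ∀ {l : List ℕ} {n k : ℕ}, l.length ≤ k → (∀ x ∈ l, x ≤ n) →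
    Encodable.encode l ≤ betaB n k := by
  intro l
  induction l with
  | nil => intro n k _ _; simp [Encodable.encode_list_nil]
  | cons a l ih =>
    intro n k hk hb
    match k, hk with
    | k+1, hk =>
      have h1 : Encodable.encode l ≤ betaB n k :=
        ih (Nat.succ_le_succ_iff.1 hk) fun x hx => hb x (List.mem_cons_of_mem _ hx)
      have h2 : (Encodable.encode a : ℕ) ≤ n := by simpa using hb a List.mem_cons_self
      calc Encodable.encode (a :: l) = Nat.pair (Encodable.encode a) (Encodable.encode l) + 1 :=
            Encodable.encode_list_cons a l
        _ ≤ Nat.pair n (betaB n k) + 1 := Nat.succ_le_succ (Nat.pair_mono h2 h1)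
        _ = betaB n (k+1) := rfl

/-- injectivity check (context-free). -/
def injOK (p : List ℕ) : Bool :=
  ballB p.length fun i => ballB i fun j => !(p.getD i 0 == p.getD j 0)

/-- all entries below `n` check. -/
def entboundOK (n : ℕ) (xs : List ℕ) : Bool :=
  ballB xs.length fun t => decide (xs.getD t 0 < n)

theorem entboundOK_iff {n : ℕ} {xs : List ℕ} :
    entboundOK n xs = true ↔ ∀ x ∈ xs, x < n := by
  rw [entboundOK, ballB_iff]
  constructor
  · intro H x hx
    obtain ⟨t, ht, rfl⟩ := List.mem_iff_getElem.1 hx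
    have := H t ht
    rwa [List.getD_eq_getElem _ _ ht, decide_eq_true_eq] at this
  · intro H t ht
    rw [List.getD_eq_getElem _ _ ht, decide_eq_true_eq]
    exact H _ (List.getElem_mem _)

/-- `xs.map (fun j => p.getD j 0)`, computed by recursion (for computability). -/
def mapgetd (p xs : List ℕ) : List ℕ :=
  Nat.rec [] (fun t acc => acc ++ [p.getD (xs.getD t 0) 0]) xs.length

theorem mapgetd_eq (p xs : List ℕ) : mapgetd p xs = xs.map fun j => p.getD j 0 := by
  suffices H : ∀ n ≤ xs.length,
      (Nat.rec [] (fun t acc => acc ++ [p.getD (xs.getD t 0) 0]) n : List ℕ)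
        = (xs.take n).map fun j => p.getD j 0 by
    simpa [mapgetd] using H xs.length le_rfl
  intro n hn
  induction n with
  | zero => simp
  | succ m ih =>
    have hm : m < xs.length := hn
    have hrec : (Nat.rec [] (fun t acc => acc ++ [p.getD (xs.getD t 0) 0]) (m+1) : List ℕ)
        = (Nat.rec [] (fun t acc => acc ++ [p.getD (xs.getD t 0) 0]) m : List ℕ)
          ++ [p.getD (xs.getD m 0) 0] := rfl
    rw [hrec, ih (le_of_lt hm), ← List.take_concat_get hm, List.concat_eq_append,
      List.map_append]
    rw [List.getD_eq_getElem _ _ hm]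
    simp

/-- Context for the isomorphism tree. -/
structure Ctx where
  h : ℕ → ℕ
  FA : ℕ → List ℕ → ℕ
  FB : ℕ → List ℕ → ℕ
  rA : ℕ → List ℕ → Bool
  rB : ℕ → List ℕ → Bool
  arf : ℕ → Option ℕ
  arr : ℕ → Option ℕ

namespace Ctx

variable (C : Ctx)

/-- `maxHN n` = max of `h i` for `i < n`. -/
def maxHN (n : ℕ) : ℕ := Nat.rec 0 (fun i acc => max (C.h i) acc) n

theorem h_le_maxHN {i n : ℕ} (hi : i < n) : C.h i ≤ C.maxHN n := by
  induction n with
  | zero => omega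
  | succ m ih =>
    rcases Nat.lt_succ_iff_lt_or_eq.1 hi with hi | rfl
    · exact le_trans (ih hi) (le_max_right _ _)
    · exact le_max_left _ _

def entOK (p : List ℕ) : Bool := ballB p.length fun i => decide (p.getD i 0 ≤ C.h i)

def surjOK (p : List ℕ) : Bool :=
  ballB p.length fun y =>
    implB (decide (C.h y < p.length)) (bexB (C.h y + 1) fun x => p.getD x 0 == y)

def relOK (p : List ℕ) : Bool :=
  ballB p.length fun i => (C.arr i).elim true fun k =>
    ballB (betaB p.length k + 1) fun code =>
      (Encodable.decode (α := List ℕ) code).elim true fun xs =>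
        implB (xs.length == k && entboundOK p.length xs)
          (C.rA i xs == C.rB i (mapgetd p xs))

def funOK (p : List ℕ) : Bool :=
  ballB p.length fun i => (C.arf i).elim true fun k =>
    ballB (betaB p.length k + 1) fun code =>
      (Encodable.decode (α := List ℕ) code).elim true fun xs =>
        implB (xs.length == k && entboundOK p.length xs)
          (implB (decide (C.FA i xs < p.length))
            (p.getD (C.FA i xs) 0 == C.FB i (mapgetd p xs)))

def TreeB (p : List ℕ) : Bool :=
  C.entOK p && (injOK p && (C.surjOK p && (C.relOK p && C.funOK p)))

/-- The `Prop`-level description of tree membership. -/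
structure TreeP (p : List ℕ) : Prop where
  ent : ∀ i < p.length, p.getD i 0 ≤ C.h i
  inj : ∀ i < p.length, ∀ j < i, p.getD i 0 ≠ p.getD j 0
  surj : ∀ y < p.length, C.h y < p.length → ∃ x ≤ C.h y, p.getD x 0 = y
  rel : ∀ i < p.length, ∀ k, C.arr i = some k → ∀ xs : List ℕ, xs.length = k →
    (∀ x ∈ xs, x < p.length) → C.rA i xs = C.rB i (xs.map fun j => p.getD j 0)
  func : ∀ i < p.length, ∀ k, C.arf i = some k → ∀ xs : List ℕ, xs.length = k →
    (∀ x ∈ xs, x < p.length) → C.FA i xs < p.length →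
      p.getD (C.FA i xs) 0 = C.FB i (xs.map fun j => p.getD j 0)

theorem treeB_iff {p : List ℕ} : C.TreeB p = true ↔ C.TreeP p := by
  rw [TreeB]
  simp only [Bool.and_eq_true]
  constructor
  · rintro ⟨h1, h2, h3, h4, h5⟩
    constructor
    · intro i hi
      have := ballB_iff.1 h1 i hi
      rwa [decide_eq_true_eq] at this
    · intro i hi j hj
      have := ballB_iff.1 (ballB_iff.1 h2 i hi) j hj
      simpa using this
    · intro y hy hhy
      have := implB_iff.1 (ballB_iff.1 h3 y hy) (decide_eq_true hhy)
      obtain ⟨x, hx, hx2⟩ := bexB_iff.1 this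
      exact ⟨x, Nat.lt_succ_iff.1 hx, by simpa using hx2⟩
    · intro i hi k hk xs hlen hent
      have h := ballB_iff.1 h4 i hi
      rw [hk] at h
      simp only [Option.elim] at h
      have hcode : Encodable.encode xs < betaB p.length k + 1 :=
        Nat.lt_succ_of_le (encode_le_betaB (le_of_eq hlen)
          fun x hx => le_of_lt (hent x hx))
      have h2 := ballB_iff.1 h (Encodable.encode xs) hcode
      rw [Encodable.encodek] at h2
      simp only [Option.elim] at h2
      have h3 := implB_iff.1 h2 (by
        rw [Bool.and_eq_true, beq_iff_eq]
        exact ⟨hlen, entboundOK_iff.2 hent⟩)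
      rw [beq_iff_eq, mapgetd_eq] at h3
      exact h3
    · intro i hi k hk xs hlen hent hlt
      have h := ballB_iff.1 h5 i hi
      rw [hk] at h
      simp only [Option.elim] at h
      have hcode : Encodable.encode xs < betaB p.length k + 1 :=
        Nat.lt_succ_of_le (encode_le_betaB (le_of_eq hlen)
          fun x hx => le_of_lt (hent x hx))
      have h2 := ballB_iff.1 h (Encodable.encode xs) hcode
      rw [Encodable.encodek] at h2
      simp only [Option.elim] at h2
      have h3 := implB_iff.1 h2 (by
        rw [Bool.and_eq_true, beq_iff_eq]
        exact ⟨hlen, entboundOK_iff.2 hent⟩)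
      have h4 := implB_iff.1 h3 (decide_eq_true hlt)
      rw [beq_iff_eq, mapgetd_eq] at h4
      exact h4
  · rintro ⟨e1, e2, e3, e4, e5⟩
    refine ⟨?_, ?_, ?_, ?_, ?_⟩
    · exact ballB_iff.2 fun i hi => decide_eq_true (e1 i hi)
    · exact ballB_iff.2 fun i hi => ballB_iff.2 fun j hj => by
        simpa using e2 i hi j hj
    · refine ballB_iff.2 fun y hy => implB_iff.2 fun hd => ?_
      obtain ⟨x, hx, hx2⟩ := e3 y hy (of_decide_eq_true hd)
      exact bexB_iff.2 ⟨x, Nat.lt_succ_of_le hx, by simpa using hx2⟩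
    · refine ballB_iff.2 fun i hi => ?_
      rcases harr : C.arr i with _ | k
      · simp [Option.elim]
      · simp only [Option.elim]
        refine ballB_iff.2 fun code _ => ?_
        rcases hdec : Encodable.decode (α := List ℕ) code with _ | xs
        · simp [Option.elim]
        · simp only [Option.elim]
          refine implB_iff.2 fun hside => ?_
          rw [Bool.and_eq_true, beq_iff_eq] at hside
          rw [beq_iff_eq, mapgetd_eq]
          exact e4 i hi k harr xs hside.1 (entboundOK_iff.1 hside.2)
    · refine ballB_iff.2 fun i hi => ?_
      rcases harf : C.arf i with _ | k
      · simp [Option.elim]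
      · simp only [Option.elim]
        refine ballB_iff.2 fun code _ => ?_
        rcases hdec : Encodable.decode (α := List ℕ) code with _ | xs
        · simp [Option.elim]
        · simp only [Option.elim]
          refine implB_iff.2 fun hside => ?_
          rw [Bool.and_eq_true, beq_iff_eq] at hside
          refine implB_iff.2 fun hlt => ?_
          rw [beq_iff_eq, mapgetd_eq]
          exact e5 i hi k harf xs hside.1 (entboundOK_iff.1 hside.2)
            (of_decide_eq_true hlt)
  
end Ctx
-- ===== Part 3b: extendibility, König's lemma, and the leftmost path =====

theorem List.getD_take' {q : List ℕ} {n i : ℕ} (h : i < n) :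
    (q.take n).getD i 0 = q.getD i 0 := by
  by_cases hi : i < q.length
  · have h1 : i < (q.take n).length := by simp [Nat.lt_min]; omega
    rw [List.getD_eq_getElem _ _ h1, List.getD_eq_getElem _ _ hi]
    simp
  · rw [List.getD_eq_default, List.getD_eq_default] <;> simp at * <;> omega

theorem List.getD_concat_self (p : List ℕ) (j : ℕ) : (p ++ [j]).getD p.length 0 = j := by
  rw [List.getD_append_right _ _ _ _ le_rfl]
  simp

theorem List.getD_concat_lt {p : List ℕ} {i : ℕ} (j : ℕ) (h : i < p.length) :
    (p ++ [j]).getD i 0 = p.getD i 0 := List.getD_append _ _ _ _ h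

theorem List.mem_le_foldr_max {x : ℕ} : ∀ {l : List ℕ}, x ∈ l → x ≤ l.foldr max 0 := by
  intro l
  induction l with
  | nil => simp
  | cons a l ih =>
    intro hx
    rcases List.mem_cons.1 hx with rfl | hx
    · exact le_max_left _ _
    · exact le_trans (ih hx) (le_max_right _ _)

namespace Ctx

variable (C : Ctx)

def ExtP (p : List ℕ) (m : ℕ) : Prop :=
  ∃ q : List ℕ, C.TreeP q ∧ q.length = p.length + m ∧ ∀ i < p.length, q.getD i 0 = p.getD i 0

def ExtB (p : List ℕ) (m : ℕ) : Bool :=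
  bexB (betaB (C.maxHN (p.length + m)) (p.length + m) + 1) fun code =>
    (Encodable.decode (α := List ℕ) code).elim false fun q =>
      C.TreeB q && ((q.length == p.length + m) &&
        ballB p.length fun i => q.getD i 0 == p.getD i 0)

theorem extB_iff {p : List ℕ} {m : ℕ} : C.ExtB p m = true ↔ C.ExtP p m := by
  rw [ExtB, bexB_iff]
  constructor
  · rintro ⟨code, _, hc⟩
    rcases hdec : Encodable.decode (α := List ℕ) code with _ | q
    · rw [hdec] at hc; simp [Option.elim] at hc
    · rw [hdec] at hc
      simp only [Option.elim, Bool.and_eq_true, beq_iff_eq] at hc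
      obtain ⟨ht, hlen, hagree⟩ := hc
      exact ⟨q, (C.treeB_iff).1 ht, hlen, fun i hi => by
        simpa using ballB_iff.1 hagree i hi⟩
  · rintro ⟨q, ht, hlen, hagree⟩
    refine ⟨Encodable.encode q, ?_, ?_⟩
    · have hent : ∀ x ∈ q, x ≤ C.maxHN (p.length + m) := by
        intro x hx
        obtain ⟨t, htl, rfl⟩ := List.mem_iff_getElem.1 hx
        have h1 := ht.ent t htl
        rw [List.getD_eq_getElem _ _ htl] at h1
        exact le_trans h1 (C.h_le_maxHN (hlen ▸ htl))
      exact Nat.lt_succ_of_le (encode_le_betaB (le_of_eq hlen) hent)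
    · rw [Encodable.encodek]
      simp only [Option.elim, Bool.and_eq_true, beq_iff_eq]
      exact ⟨(C.treeB_iff).2 ht, hlen,
        ballB_iff.2 fun i hi => by simpa using hagree i hi⟩

theorem treeP_take {q : List ℕ} {n : ℕ} (ht : C.TreeP q) (hn : n ≤ q.length) :
    C.TreeP (q.take n) := by
  have hlen : (q.take n).length = n := by simp; omega
  constructor
  · intro i hi
    rw [hlen] at hi
    rw [List.getD_take' hi]
    exact ht.ent i (lt_of_lt_of_le hi hn)
  · intro i hi j hj
    rw [hlen] at hi
    rw [List.getD_take' hi, List.getD_take' (lt_trans hj hi)]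
    exact ht.inj i (lt_of_lt_of_le hi hn) j hj
  · intro y hy hh
    rw [hlen] at hy hh
    obtain ⟨x, hx, hx2⟩ := ht.surj y (lt_of_lt_of_le hy hn) (lt_of_lt_of_le hh hn)
    exact ⟨x, hx, by rw [List.getD_take' (lt_of_le_of_lt hx hh)]; exact hx2⟩
  · intro i hi k hk xs hxs hent
    rw [hlen] at hi hent
    have h1 := ht.rel i (lt_of_lt_of_le hi hn) k hk xs hxs
      fun x hx => lt_of_lt_of_le (hent x hx) hn
    rw [h1]
    congr 1
    exact List.map_congr_left fun x hx => (List.getD_take' (hent x hx)).symm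
  · intro i hi k hk xs hxs hent hlt
    rw [hlen] at hi hent hlt
    have h1 := ht.func i (lt_of_lt_of_le hi hn) k hk xs hxs
      (fun x hx => lt_of_lt_of_le (hent x hx) hn) (lt_of_lt_of_le hlt hn)
    rw [List.getD_take' hlt, h1]
    congr 1
    exact List.map_congr_left fun x hx => (List.getD_take' (hent x hx)).symm

theorem extP_mono {p : List ℕ} {m m' : ℕ} (h : C.ExtP p m) (hm : m' ≤ m) : C.ExtP p m' := by
  obtain ⟨q, ht, hlen, hagree⟩ := h
  refine ⟨q.take (p.length + m'), C.treeP_take ht (by omega), by simp; omega, fun i hi => ?_⟩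
  rw [List.getD_take' (by omega)]
  exact hagree i hi

def Alive (p : List ℕ) : Prop := ∀ m, C.ExtP p m

theorem alive_treeP {p : List ℕ} (h : C.Alive p) : C.TreeP p := by
  obtain ⟨q, ht, hlen, hagree⟩ := h 0
  have : q = p := by
    apply List.ext_getElem (by omega)
    intro i h1 h2
    have := hagree i h2
    rwa [List.getD_eq_getElem _ _ h1, List.getD_eq_getElem _ _ h2] at this
  rwa [this] at ht

theorem konig {p : List ℕ} (h : C.Alive p) :
    ∃ j, j ≤ C.h p.length ∧ C.Alive (p ++ [j]) := by
  by_contra hc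
  push_neg at hc
  have hex : ∀ j, ∃ m, j ≤ C.h p.length → ¬ C.ExtP (p ++ [j]) m := by
    intro j
    by_cases hj : j ≤ C.h p.length
    · obtain ⟨m, hm⟩ := not_forall.1 (hc j hj)
      exact ⟨m, fun _ => hm⟩
    · exact ⟨0, fun hj2 => absurd hj2 hj⟩
  choose mj hmj using hex
  set M := (Finset.range (C.h p.length + 1)).sup mj with hM
  obtain ⟨q, ht, hlen, hagree⟩ := h (M + 1)
  set j := q.getD p.length 0 with hj
  have hjle : j ≤ C.h p.length := ht.ent p.length (by omega)
  have hext : C.ExtP (p ++ [j]) M := by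
    refine ⟨q, ht, by simp; omega, fun i hi => ?_⟩
    simp only [List.length_append, List.length_singleton] at hi
    rcases Nat.lt_succ_iff_lt_or_eq.1 hi with hi | rfl
    · rw [List.getD_concat_lt _ hi]
      exact hagree i hi
    · rw [List.getD_concat_self]
  have hmjM : mj j ≤ M :=
    Finset.le_sup (Finset.mem_range.2 (Nat.lt_succ_of_le hjle))
  exact hmj j hjle (C.extP_mono hext hmjM)

/-- The leftmost choice of next value extending `p` (or `h p.length + 1` as junk). -/
noncomputable def pick (p : List ℕ) : ℕ :=
  @Nat.find (fun j => C.Alive (p ++ [j]) ∨ j = C.h p.length + 1) (Classical.decPred _)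
    ⟨C.h p.length + 1, Or.inr rfl⟩

theorem pick_spec {p : List ℕ} (h : C.Alive p) :
    C.Alive (p ++ [C.pick p]) ∧ C.pick p ≤ C.h p.length ∧
      ∀ j < C.pick p, ¬ C.Alive (p ++ [j]) := by
  obtain ⟨j0, hj0, hal⟩ := C.konig h
  have h1 : C.pick p ≤ j0 :=
    @Nat.find_min' (fun j => C.Alive (p ++ [j]) ∨ j = C.h p.length + 1)
      (Classical.decPred _) ⟨C.h p.length + 1, Or.inr rfl⟩ j0 (Or.inl hal)
  have h2 : C.Alive (p ++ [C.pick p]) ∨ C.pick p = C.h p.length + 1 :=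
    @Nat.find_spec (fun j => C.Alive (p ++ [j]) ∨ j = C.h p.length + 1)
      (Classical.decPred _) ⟨C.h p.length + 1, Or.inr rfl⟩
  have hle : C.pick p ≤ C.h p.length := le_trans h1 hj0
  rcases h2 with h2 | h2
  · refine ⟨h2, hle, fun j hj hal2 => ?_⟩
    have h3 : C.pick p ≤ j :=
      @Nat.find_min' (fun j => C.Alive (p ++ [j]) ∨ j = C.h p.length + 1)
        (Classical.decPred _) ⟨C.h p.length + 1, Or.inr rfl⟩ j (Or.inl hal2)
    omega
  · omega

/-- The leftmost path through the tree. -/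
noncomputable def path (n : ℕ) : List ℕ :=
  Nat.rec [] (fun _ p => p ++ [C.pick p]) n

theorem path_succ (n : ℕ) : C.path (n+1) = C.path n ++ [C.pick (C.path n)] := rfl

@[simp] theorem path_length (n : ℕ) : (C.path n).length = n := by
  induction n with
  | zero => rfl
  | succ m ih => rw [path_succ]; simp [ih]

theorem path_alive (h0 : C.Alive []) : ∀ n, C.Alive (C.path n) := by
  intro n
  induction n with
  | zero => exact h0
  | succ m ih => rw [path_succ]; exact (C.pick_spec ih).1

/-- The limit isomorphism. -/
noncomputable def limit (n : ℕ) : ℕ := (C.path (n+1)).getD n 0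

theorem path_getD {n t : ℕ} (h : n < t) : (C.path t).getD n 0 = C.limit n := by
  induction t with
  | zero => omega
  | succ m ih =>
    rcases Nat.lt_succ_iff_lt_or_eq.1 h with h | rfl
    · rw [C.path_succ, List.getD_concat_lt _ (by simpa using h)]
      exact ih h
    · rfl

section Limit

variable (h0 : C.Alive [])

theorem path_treeP (n : ℕ) : C.Alive [] → C.TreeP (C.path n) := fun h0 =>
  C.alive_treeP (C.path_alive h0 n)

theorem limit_inj (h0 : C.Alive []) : Function.Injective C.limit := by
  intro a b hab
  by_contra hne
  wlog hlt : a < b generalizing a b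
  · exact this hab.symm (Ne.symm hne) (by omega)
  · have ht := C.path_treeP (b+1) h0
    have := ht.inj b (by simp) a hlt
    rw [C.path_getD (by omega), C.path_getD (by omega)] at this
    exact this hab.symm

theorem limit_surj (h0 : C.Alive []) (y : ℕ) : ∃ x, x ≤ C.h y ∧ C.limit x = y := by
  set t := max (y+1) (C.h y + 1) with htdef
  have ht := C.path_treeP t h0
  obtain ⟨x, hx, hx2⟩ := ht.surj y (by rw [C.path_length]; omega) (by rw [C.path_length]; omega)
  refine ⟨x, hx, ?_⟩
  rw [← C.path_getD (t := t) (by omega)]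
  exact hx2

theorem limit_rel (h0 : C.Alive []) (i k : ℕ) (hk : C.arr i = some k) (xs : List ℕ)
    (hxs : xs.length = k) : C.rA i xs = C.rB i (xs.map C.limit) := by
  set t := (i :: xs).foldr max 0 + 1 with htdef
  have hit : i < t := by
    have := List.mem_le_foldr_max (l := i :: xs) List.mem_cons_self; omega
  have hxt : ∀ x ∈ xs, x < t := by
    intro x hx
    have := List.mem_le_foldr_max (l := i :: xs) (List.mem_cons_of_mem i hx); omega
  have ht := C.path_treeP t h0
  have := ht.rel i (by simpa using hit) k hk xs hxs (by simpa using hxt)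
  rw [this]
  congr 1
  exact List.map_congr_left fun x hx => C.path_getD (hxt x hx)

theorem limit_func (h0 : C.Alive []) (i k : ℕ) (hk : C.arf i = some k) (xs : List ℕ)
    (hxs : xs.length = k) : C.limit (C.FA i xs) = C.FB i (xs.map C.limit) := by
  set t := (i :: C.FA i xs :: xs).foldr max 0 + 1 with htdef
  have hit : i < t := by
    have := List.mem_le_foldr_max (l := i :: C.FA i xs :: xs) List.mem_cons_self; omega
  have hft : C.FA i xs < t := by
    have := List.mem_le_foldr_max (l := i :: C.FA i xs :: xs)
      (List.mem_cons_of_mem _ List.mem_cons_self); omega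
  have hxt : ∀ x ∈ xs, x < t := by
    intro x hx
    have := List.mem_le_foldr_max (l := i :: C.FA i xs :: xs)
      (List.mem_cons_of_mem _ (List.mem_cons_of_mem _ hx)); omega
  have ht := C.path_treeP t h0
  have := ht.func i (by simpa using hit) k hk xs hxs (by simpa using hxt) (by simpa using hft)
  rw [← C.path_getD (t := t) hft, this]
  congr 1
  exact List.map_congr_left fun x hx => C.path_getD (hxt x hx)

end Limit

end Ctx
-- ===== Part 3c: the given isomorphism witnesses that the tree is infinite =====

namespace Ctx

variable (C : Ctx)

theorem alive_nil_of_iso (f finv : ℕ → ℕ)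
    (hb : ∀ n, f n ≤ C.h n)
    (hinj : Function.Injective f)
    (hsur : ∀ y, finv y ≤ C.h y ∧ f (finv y) = y)
    (hrel : ∀ i k, C.arr i = some k → ∀ xs : List ℕ, xs.length = k →
      C.rA i xs = C.rB i (xs.map f))
    (hfun : ∀ i k, C.arf i = some k → ∀ xs : List ℕ, xs.length = k →
      f (C.FA i xs) = C.FB i (xs.map f)) :
    C.Alive [] := by
  intro m
  have hg : ∀ i < m, ((List.range m).map f).getD i 0 = f i := by
    intro i hi
    rw [List.getD_eq_getElem _ _ (by simpa using hi)]
    simp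
  have hlen : ((List.range m).map f).length = m := by simp
  refine ⟨(List.range m).map f, ?_, by simp, by simp⟩
  constructor
  · intro i hi
    rw [hlen] at hi
    rw [hg i hi]; exact hb i
  · intro i hi j hj
    rw [hlen] at hi
    rw [hg i hi, hg j (lt_trans hj hi)]
    exact fun hc => (Nat.ne_of_gt hj) (hinj hc)
  · intro y hy hh
    rw [hlen] at hy hh
    refine ⟨finv y, (hsur y).1, ?_⟩
    rw [hg _ (lt_of_le_of_lt (hsur y).1 hh)]
    exact (hsur y).2
  · intro i hi k hk xs hxs hent
    rw [hlen] at hi hent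
    rw [hrel i k hk xs hxs]
    congr 1
    exact List.map_congr_left fun x hx => (hg x (hent x hx)).symm
  · intro i hi k hk xs hxs hent hlt
    rw [hlen] at hi hent hlt
    rw [hg _ hlt, hfun i k hk xs hxs]
    congr 1
    exact List.map_congr_left fun x hx => (hg x (hent x hx)).symm

end Ctx
-- ===== Part 4: computability of the tree predicate =====

section ComputabilityHelpers

open Computable

theorem Computable.option_elim' {α β σ} [Primcodable α] [Primcodable β] [Primcodable σ]
    {o : α → Option β} {b : α → σ} {f : α → β → σ}
    (ho : Computable o) (hb : Computable b) (hf : Computable₂ f) :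
    Computable fun a => (o a).elim (b a) (f a) :=
  (Computable.option_casesOn ho hb hf).of_eq fun a => by cases o a <;> rfl

theorem cNatLe : Computable₂ fun a b : ℕ => decide (a ≤ b) := Primrec.nat_le.decide.to_comp

theorem cNatLt : Computable₂ fun a b : ℕ => decide (a < b) := Primrec.nat_lt.decide.to_comp

theorem cNatBeq : Computable₂ fun a b : ℕ => a == b := Primrec.beq.to_comp

theorem cBoolBeq : Computable₂ fun a b : Bool => a == b := Primrec.beq.to_comp

theorem cImplB : Computable₂ implB := by
  have : Computable fun z : Bool × Bool => cond z.1 z.2 true :=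
    Computable.cond Computable.fst Computable.snd (Computable.const true)
  have h2 : Computable fun z : Bool × Bool => implB z.1 z.2 :=
    this.of_eq fun z => by cases z.1 <;> simp [implB]
  exact h2

theorem cAndB : Computable₂ (· && · : Bool → Bool → Bool) := by
  have : Computable fun z : Bool × Bool => cond z.1 z.2 false :=
    Computable.cond Computable.fst Computable.snd (Computable.const false)
  have h2 : Computable fun z : Bool × Bool => z.1 && z.2 :=
    this.of_eq fun z => by cases z.1 <;> simp
  exact h2

theorem cGetD0 : Computable₂ fun (l : List ℕ) (n : ℕ) => l.getD n 0 :=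
  (Primrec.list_getD 0).to_comp

theorem cBetaB : Computable₂ betaB := by
  have : Computable fun x : ℕ × ℕ =>
      Nat.rec (motive := fun _ => ℕ) 0 (fun _ acc => Nat.pair x.1 acc + 1) x.2 :=
    Computable.nat_rec Computable.snd (Computable.const 0)
      ((Computable.succ.comp
        (Primrec₂.natPair.to_comp.comp (Computable.fst.comp Computable.fst)
          (Computable.snd.comp Computable.snd))).to₂)
  have h2 : Computable fun x : ℕ × ℕ => betaB x.1 x.2 := by
    refine this.of_eq fun x => ?_
    induction x.2 with
    | zero => rfl
    | succ m ih =>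
      show Nat.pair x.1 (Nat.rec 0 (fun _ acc => Nat.pair x.1 acc + 1) m) + 1 = _
      rw [ih]
      rfl
  exact h2

theorem cEntboundOK : Computable₂ entboundOK := by
  have : Computable fun x : ℕ × List ℕ => ballB x.2.length fun t => decide (x.2.getD t 0 < x.1) :=
    Computable.ballB (Computable.list_length.comp Computable.snd)
      ((cNatLt.comp (cGetD0.comp (Computable.snd.comp Computable.fst) Computable.snd)
        (Computable.fst.comp Computable.fst)).to₂)
  have h2 : Computable fun x : ℕ × List ℕ => entboundOK x.1 x.2 := this.of_eq fun x => rfl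
  exact h2

theorem cMapgetd : Computable₂ mapgetd := by
  have : Computable fun x : List ℕ × List ℕ =>
      Nat.rec (motive := fun _ => List ℕ) []
        (fun t acc => acc ++ [x.1.getD (x.2.getD t 0) 0]) x.2.length :=
    Computable.nat_rec (Computable.list_length.comp Computable.snd)
      (Computable.const [])
      ((Computable.list_concat.comp (Computable.snd.comp Computable.snd)
        (cGetD0.comp (Computable.fst.comp Computable.fst)
          (cGetD0.comp (Computable.snd.comp Computable.fst)
            (Computable.fst.comp Computable.snd)))).to₂)
  have h2 : Computable fun x : List ℕ × List ℕ => mapgetd x.1 x.2 := this.of_eq fun x => rfl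
  exact h2

end ComputabilityHelpers

namespace Ctx

variable (C : Ctx)

theorem maxHN_computable (hh : Computable C.h) : Computable C.maxHN := by
  have : Computable fun n : ℕ =>
      Nat.rec (motive := fun _ => ℕ) 0 (fun i acc => max (C.h i) acc) n :=
    Computable.nat_rec Computable.id (Computable.const 0)
      ((Primrec.nat_max.to_comp.comp (hh.comp (Computable.fst.comp Computable.snd))
        (Computable.snd.comp Computable.snd)).to₂)
  exact this.of_eq fun n => rfl

theorem entOK_computable (hh : Computable C.h) : Computable C.entOK :=
  Computable.ballB Computable.list_length
    ((cNatLe.comp (cGetD0.comp Computable.fst Computable.snd)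
      (hh.comp Computable.snd)).to₂)

theorem cNotB : Computable Bool.not := by
  have : Computable fun b : Bool => cond b false true :=
    Computable.cond Computable.id (Computable.const false) (Computable.const true)
  exact this.of_eq fun b => by cases b <;> rfl

theorem injOK_computable : Computable injOK := by
  have hinner : Computable₂ fun (x : List ℕ × ℕ) (j : ℕ) =>
      !(x.1.getD x.2 0 == x.1.getD j 0) :=
    cNotB.comp (cNatBeq.comp
      (cGetD0.comp (Computable.fst.comp Computable.fst) (Computable.snd.comp Computable.fst))
      (cGetD0.comp (Computable.fst.comp Computable.fst) Computable.snd))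
  have houter : Computable₂ fun (p : List ℕ) (i : ℕ) =>
      ballB i fun j => !(p.getD i 0 == p.getD j 0) :=
    Computable.ballB Computable.snd hinner
  exact Computable.ballB Computable.list_length houter

theorem surjOK_computable (hh : Computable C.h) : Computable C.surjOK :=
  Computable.ballB Computable.list_length
    ((cImplB.comp
      (cNatLt.comp (hh.comp Computable.snd) (Computable.list_length.comp Computable.fst))
      (Computable.bexB (Computable.succ.comp (hh.comp Computable.snd))
        ((cNatBeq.comp
          (cGetD0.comp (Computable.fst.comp Computable.fst) Computable.snd)
          (Computable.snd.comp Computable.fst)).to₂))).to₂)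

theorem relOK_computable (hrA : Computable₂ C.rA) (hrB : Computable₂ C.rB) (harr : Computable C.arr) : Computable C.relOK :=
  Computable.ballB Computable.list_length
    ((Computable.option_elim' (harr.comp Computable.snd) (Computable.const true)
      ((Computable.ballB
        (Computable.succ.comp (cBetaB.comp
          (Computable.list_length.comp (Computable.fst.comp Computable.fst))
          Computable.snd))
        ((Computable.option_elim' (Computable.decode.comp Computable.snd)
          (Computable.const true)
          ((cImplB.comp
            (cAndB.comp
              (cNatBeq.comp (Computable.list_length.comp Computable.snd)
                (Computable.snd.comp (Computable.fst.comp Computable.fst)))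
              (cEntboundOK.comp
                (Computable.list_length.comp
                  (Computable.fst.comp (Computable.fst.comp (Computable.fst.comp Computable.fst))))
                Computable.snd))
            (cBoolBeq.comp
              (hrA.comp
                (Computable.snd.comp (Computable.fst.comp (Computable.fst.comp Computable.fst)))
                Computable.snd)
              (hrB.comp
                (Computable.snd.comp (Computable.fst.comp (Computable.fst.comp Computable.fst)))
                (cMapgetd.comp
                  (Computable.fst.comp (Computable.fst.comp (Computable.fst.comp Computable.fst)))
                  Computable.snd)))).to₂)).to₂)).to₂)).to₂)

theorem funOK_computable (hFA : Computable₂ C.FA) (hFB : Computable₂ C.FB) (harf : Computable C.arf) : Computable C.funOK :=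
  Computable.ballB Computable.list_length
    ((Computable.option_elim' (harf.comp Computable.snd) (Computable.const true)
      ((Computable.ballB
        (Computable.succ.comp (cBetaB.comp
          (Computable.list_length.comp (Computable.fst.comp Computable.fst))
          Computable.snd))
        ((Computable.option_elim' (Computable.decode.comp Computable.snd)
          (Computable.const true)
          ((cImplB.comp
            (cAndB.comp
              (cNatBeq.comp (Computable.list_length.comp Computable.snd)
                (Computable.snd.comp (Computable.fst.comp Computable.fst)))
              (cEntboundOK.comp
                (Computable.list_length.comp
                  (Computable.fst.comp (Computable.fst.comp (Computable.fst.comp Computable.fst))))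
                Computable.snd))
            (cImplB.comp
              (cNatLt.comp
                (hFA.comp
                  (Computable.snd.comp (Computable.fst.comp (Computable.fst.comp Computable.fst)))
                  Computable.snd)
                (Computable.list_length.comp
                  (Computable.fst.comp (Computable.fst.comp (Computable.fst.comp Computable.fst)))))
              (cNatBeq.comp
                (cGetD0.comp
                  (Computable.fst.comp (Computable.fst.comp (Computable.fst.comp Computable.fst)))
                  (hFA.comp
                    (Computable.snd.comp (Computable.fst.comp (Computable.fst.comp Computable.fst)))
                    Computable.snd))
                (hFB.comp
                  (Computable.snd.comp (Computable.fst.comp (Computable.fst.comp Computable.fst)))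
                  (cMapgetd.comp
                    (Computable.fst.comp (Computable.fst.comp (Computable.fst.comp Computable.fst)))
                    Computable.snd))))).to₂)).to₂)).to₂)).to₂)

theorem treeB_computable (hh : Computable C.h) (hFA : Computable₂ C.FA) (hFB : Computable₂ C.FB) (hrA : Computable₂ C.rA) (hrB : Computable₂ C.rB) (harf : Computable C.arf) (harr : Computable C.arr) : Computable C.TreeB :=
  cAndB.comp (C.entOK_computable hh)
    (cAndB.comp injOK_computable
      (cAndB.comp (C.surjOK_computable hh)
        (cAndB.comp (C.relOK_computable hrA hrB harr) (C.funOK_computable hFA hFB harf))))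

theorem extB_computable (hh : Computable C.h) (hFA : Computable₂ C.FA) (hFB : Computable₂ C.FB) (hrA : Computable₂ C.rA) (hrB : Computable₂ C.rB) (harf : Computable C.arf) (harr : Computable C.arr) : Computable₂ C.ExtB := by
  have hN : Computable fun x : List ℕ × ℕ =>
      betaB (C.maxHN (x.1.length + x.2)) (x.1.length + x.2) + 1 :=
    Computable.succ.comp (cBetaB.comp
      ((C.maxHN_computable hh).comp
        (Primrec.nat_add.to_comp.comp (Computable.list_length.comp Computable.fst)
          Computable.snd))
      (Primrec.nat_add.to_comp.comp (Computable.list_length.comp Computable.fst)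
        Computable.snd))
  have : Computable fun x : List ℕ × ℕ =>
      bexB (betaB (C.maxHN (x.1.length + x.2)) (x.1.length + x.2) + 1) fun code =>
        (Encodable.decode (α := List ℕ) code).elim false fun q =>
          C.TreeB q && ((q.length == x.1.length + x.2) &&
            ballB x.1.length fun i => q.getD i 0 == x.1.getD i 0) :=
    Computable.bexB hN
      ((Computable.option_elim' (Computable.decode.comp Computable.snd)
        (Computable.const false)
        ((cAndB.comp
          ((C.treeB_computable hh hFA hFB hrA hrB harf harr).comp Computable.snd)
          (cAndB.comp
            (cNatBeq.comp (Computable.list_length.comp Computable.snd)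
              (Primrec.nat_add.to_comp.comp
                (Computable.list_length.comp (Computable.fst.comp (Computable.fst.comp Computable.fst)))
                (Computable.snd.comp (Computable.fst.comp Computable.fst))))
            (Computable.ballB
              (Computable.list_length.comp (Computable.fst.comp (Computable.fst.comp Computable.fst)))
              ((cNatBeq.comp
                (cGetD0.comp (Computable.snd.comp Computable.fst) Computable.snd)
                (cGetD0.comp
                  (Computable.fst.comp (Computable.fst.comp (Computable.fst.comp Computable.fst)))
                  Computable.snd)).to₂)))).to₂)).to₂)
  exact (this.of_eq fun x => rfl).to₂

end Ctx
-- ===== Part 5a: the simulation from a bit table, and its computability =====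

/-- Least `j < M` with `P j = true`, else `M`. -/
def leastB (M : ℕ) (P : ℕ → Bool) : ℕ :=
  Nat.rec M (fun j s => cond (s == M) (cond (P j) j M) s) M

theorem leastB_spec {M : ℕ} {P : ℕ → Bool} {j0 : ℕ} (h0 : j0 < M) (hP : P j0 = true)
    (hmin : ∀ j < j0, P j = false) : leastB M P = j0 := by
  have claim1 : ∀ t ≤ j0, (Nat.rec M (fun j s => cond (s == M) (cond (P j) j M) s) t : ℕ) = M := by
    intro t ht
    induction t with
    | zero => rfl
    | succ u ih =>
      have hu := ih (le_of_lt ht)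
      show cond ((Nat.rec M _ u : ℕ) == M) _ _ = M
      rw [hu, beq_self_eq_true, cond_true, hmin u ht, cond_false]
  have claim2 : (Nat.rec M (fun j s => cond (s == M) (cond (P j) j M) s) (j0+1) : ℕ) = j0 := by
    show cond ((Nat.rec M _ j0 : ℕ) == M) _ _ = j0
    rw [claim1 j0 le_rfl, beq_self_eq_true, cond_true, hP, cond_true]
  have claim3 : ∀ t, j0 + 1 ≤ t →
      (Nat.rec M (fun j s => cond (s == M) (cond (P j) j M) s) t : ℕ) = j0 := by
    intro t ht
    induction t with
    | zero => omega
    | succ u ih =>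
      rcases Nat.lt_or_ge j0 u with hu | hu
      · have h2 := ih hu
        show cond ((Nat.rec M _ u : ℕ) == M) _ _ = j0
        rw [h2]
        have : (j0 == M) = false := by simp; omega
        rw [this, cond_false]
      · have : u = j0 := by omega
        subst this
        exact claim2
  exact claim3 M (by omega)

/-- Get the bit for index `e` from a reversed bit list. -/
def bitget (l : List ℕ) (e : ℕ) : ℕ := l.getD (l.length - 1 - e) 7

def pickB (hfun : ℕ → ℕ) (l p : List ℕ) : ℕ :=
  leastB (hfun p.length + 2) fun j =>
    (bitget l (Encodable.encode (p ++ [j])) == 0) || (j == hfun p.length + 1)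

def gpathB (hfun : ℕ → ℕ) (l : List ℕ) (t : ℕ) : List ℕ :=
  Nat.rec [] (fun _ p => p ++ [pickB hfun l p]) t

def gvalB (hfun : ℕ → ℕ) (z : ℕ) : ℕ :=
  (gpathB hfun ((Encodable.decode (α := List ℕ) z.unpair.2).getD []) (z.unpair.1 + 1)).getD
    z.unpair.1 0

theorem cOrB : Computable₂ (· || · : Bool → Bool → Bool) := by
  have : Computable fun z : Bool × Bool => cond z.1 true z.2 :=
    Computable.cond Computable.fst (Computable.const true) Computable.snd
  have h2 : Computable fun z : Bool × Bool => z.1 || z.2 :=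
    this.of_eq fun z => by cases z.1 <;> simp
  exact h2

theorem cLeastB {α} [Primcodable α] {M : α → ℕ} {P : α → ℕ → Bool}
    (hM : Computable M) (hP : Computable₂ P) :
    Computable fun a => leastB (M a) (P a) := by
  have hstep : Computable₂ fun (a : α) (p : ℕ × ℕ) =>
      cond (p.2 == M a) (cond (P a p.1) p.1 (M a)) p.2 :=
    Computable.cond (cNatBeq.comp (Computable.snd.comp Computable.snd)
        (hM.comp Computable.fst))
      (Computable.cond (hP.comp Computable.fst (Computable.fst.comp Computable.snd))
        (Computable.fst.comp Computable.snd) (hM.comp Computable.fst))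
      (Computable.snd.comp Computable.snd)
  exact (Computable.nat_rec hM hM hstep.to₂).of_eq fun a => rfl

theorem cBitget : Computable₂ bitget :=
  (Primrec.list_getD 7).to_comp.comp Computable.fst
    (Primrec.nat_sub.to_comp.comp
      (Primrec.nat_sub.to_comp.comp (Computable.list_length.comp Computable.fst)
        (Computable.const 1))
      Computable.snd)

theorem cPickB {hfun : ℕ → ℕ} (hc : Computable hfun) : Computable₂ (pickB hfun) := by
  have hM : Computable fun x : List ℕ × List ℕ => hfun x.2.length + 2 :=
    Primrec.nat_add.to_comp.comp (hc.comp (Computable.list_length.comp Computable.snd))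
      (Computable.const 2)
  have hP : Computable₂ fun (x : List ℕ × List ℕ) (j : ℕ) =>
      (bitget x.1 (Encodable.encode (x.2 ++ [j])) == 0) || (j == hfun x.2.length + 1) :=
    cOrB.comp
      (cNatBeq.comp
        (cBitget.comp (Computable.fst.comp Computable.fst)
          (Computable.encode.comp
            (Computable.list_concat.comp (Computable.snd.comp Computable.fst) Computable.snd)))
        (Computable.const 0))
      (cNatBeq.comp Computable.snd
        (Computable.succ.comp (hc.comp
          (Computable.list_length.comp (Computable.snd.comp Computable.fst)))))
  have h2 : Computable fun x : List ℕ × List ℕ => pickB hfun x.1 x.2 :=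
    (cLeastB hM hP).of_eq fun x => by rw [pickB]
  exact h2

theorem cGpathB {hfun : ℕ → ℕ} (hc : Computable hfun) : Computable₂ (gpathB hfun) := by
  have hstep : Computable₂ fun (x : List ℕ × ℕ) (p : ℕ × List ℕ) =>
      p.2 ++ [pickB hfun x.1 p.2] :=
    Computable.list_concat.comp (Computable.snd.comp Computable.snd)
      ((cPickB hc).comp (Computable.fst.comp Computable.fst)
        (Computable.snd.comp Computable.snd))
  have h2 : Computable fun x : List ℕ × ℕ => gpathB hfun x.1 x.2 :=
    (Computable.nat_rec Computable.snd (Computable.const []) hstep.to₂).of_eq fun x => rfl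
  exact h2

theorem cGvalB {hfun : ℕ → ℕ} (hc : Computable hfun) : Computable (gvalB hfun) := by
  have hfst : Computable fun z : ℕ => z.unpair.1 :=
    Computable.fst.comp Computable.unpair
  have hsnd : Computable fun z : ℕ => z.unpair.2 :=
    Computable.snd.comp Computable.unpair
  exact cGetD0.comp
    ((cGpathB hc).comp
      (Primrec.option_getD.to_comp.comp (Computable.decode.comp hsnd) (Computable.const []))
      (Computable.succ.comp hfst))
    hfst
-- ===== Part 5b: the limit isomorphism is computable from the halting set =====

namespace RecInO

theorem totalPair {O : ℕ →. ℕ} {u v : ℕ → ℕ}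
    (hu : RecInO O (fun n => Part.some (u n))) (hv : RecInO O (fun n => Part.some (v n))) :
    RecInO O (fun n => Part.some (Nat.pair (u n) (v n))) :=
  (pair hu hv).of_eq fun n => by simp [Seq.seq]

end RecInO

namespace Ctx

theorem limit_recInO (C : Ctx)
    (hh : Computable C.h) (hFA : Computable₂ C.FA) (hFB : Computable₂ C.FB)
    (hrA : Computable₂ C.rA) (hrB : Computable₂ C.rB)
    (harf : Computable C.arf) (harr : Computable C.arr)
    (h0 : C.Alive []) :
    RecInO (setChar haltingSet) (fun n => Part.some (C.limit n)) := by
  classical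
  set O : ℕ →. ℕ := setChar haltingSet with hO
  -- the Σ1 predicate "p dies at level m"
  set pb : ℕ → ℕ → Bool :=
    fun e m => !(C.ExtB ((Encodable.decode (α := List ℕ) e).getD []) m) with hpb
  have hpbc : Computable₂ pb := by
    have : Computable fun x : ℕ × ℕ =>
        !(C.ExtB ((Encodable.decode (α := List ℕ) x.1).getD []) x.2) :=
      cNotB.comp ((C.extB_computable hh hFA hFB hrA hrB harf harr).comp
        (Primrec.option_getD.to_comp.comp (Computable.decode.comp Computable.fst)
          (Computable.const []))
        Computable.snd)
    exact this
  obtain ⟨kD, hkDc, hkD⟩ := sigma_le_halting hpbc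
  -- the characteristic function of deadness
  set χ : ℕ → ℕ := fun e => (setChar haltingSet (kD e)).get trivial with hχ
  have hχdef : ∀ e, setChar haltingSet (kD e) = Part.some (χ e) := fun e =>
    (Part.some_get _).symm
  have hχval : ∀ e, χ e = if kD e ∈ haltingSet then 1 else 0 := fun e => by
    simp [hχ, setChar]
  have hAliveBit : ∀ q : List ℕ, (χ (Encodable.encode q) = 0 ↔ C.Alive q) := by
    intro q
    rw [hχval]
    by_cases hmem : kD (Encodable.encode q) ∈ haltingSet
    · simp only [hmem, if_true]
      constructor
      · intro h; omega
      · intro hal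
        exfalso
        obtain ⟨m, hm⟩ := (hkD (Encodable.encode q)).2 hmem
        rw [hpb] at hm
        simp only [Encodable.encodek, Option.getD_some, Bool.not_eq_true'] at hm
        exact absurd ((C.extB_iff).2 (hal m)) (by rw [hm]; simp)
    · simp only [hmem, if_false]
      constructor
      · intro _ m
        by_contra hext
        apply hmem
        refine (hkD (Encodable.encode q)).1 ⟨m, ?_⟩
        rw [hpb]
        simp only [Encodable.encodek, Option.getD_some, Bool.not_eq_true']
        rw [← Bool.not_eq_true]
        intro hc
        exact hext ((C.extB_iff).1 hc)
      · intro _; trivial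
  -- the bit table
  set blist : ℕ → List ℕ := fun N => Nat.rec [] (fun m acc => χ m :: acc) N with hblist
  have hblen : ∀ N, (blist N).length = N := by
    intro N
    induction N with
    | zero => rfl
    | succ m ih => simp [hblist] at *; omega
  have hbget : ∀ N e, e < N → bitget (blist N) e = χ e := by
    intro N
    induction N with
    | zero => omega
    | succ m ih =>
      intro e he
      have hcons : blist (m+1) = χ m :: blist m := rfl
      rw [bitget, hcons]
      rcases Nat.lt_succ_iff_lt_or_eq.1 he with he | rfl
      · have hlen : (χ m :: blist m).length - 1 - e = (m - 1 - e) + 1 := by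
          simp [hblen m]; omega
        rw [hlen, List.getD_cons_succ]
        have := ih e he
        rw [bitget, hblen m] at this
        exact this
      · have hlen : (χ e :: blist e).length - 1 - e = 0 := by simp [hblen e]
        rw [hlen, List.getD_cons_zero]
  -- the bound on queries
  set NB : ℕ → ℕ := fun n => betaB (C.maxHN (n+1) + 1) (n+1) + 1 with hNB
  have hNBc : Computable NB := by
    have : Computable fun n : ℕ => betaB (C.maxHN (n+1) + 1) (n+1) + 1 :=
      Computable.succ.comp (cBetaB.comp
        (Computable.succ.comp ((C.maxHN_computable hh).comp Computable.succ))
        Computable.succ)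
    exact this
  have hqbound : ∀ t j n, t ≤ n → j ≤ C.h t + 1 →
      Encodable.encode (C.path t ++ [j]) < NB n := by
    intro t j n htn hj
    rw [hNB]
    refine Nat.lt_succ_of_le (encode_le_betaB ?_ ?_)
    · simp [C.path_length t]; omega
    · intro x hx
      rcases List.mem_append.1 hx with hx | hx
      · obtain ⟨i, hi, rfl⟩ := List.mem_iff_getElem.1 hx
        have hi' : i < t := by simpa [C.path_length t] using hi
        have := (C.path_treeP t h0).ent i (by simpa [C.path_length t] using hi')
        rw [List.getD_eq_getElem _ _ hi] at this
        exact le_trans this (le_trans (C.h_le_maxHN (by omega)) (Nat.le_succ _))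
      · rw [List.mem_singleton.1 hx]
        exact le_trans hj (Nat.succ_le_succ (C.h_le_maxHN (by omega)))
  -- simulation correctness
  have hsimpath : ∀ n t, t ≤ n + 1 → gpathB C.h (blist (NB n)) t = C.path t := by
    intro n t
    induction t with
    | zero => intro _; rfl
    | succ u ih =>
      intro hu
      have hrec : gpathB C.h (blist (NB n)) (u+1)
          = gpathB C.h (blist (NB n)) u ++ [pickB C.h (blist (NB n)) (gpathB C.h (blist (NB n)) u)] := rfl
      rw [hrec, ih (by omega), C.path_succ]
      have halive := C.path_alive h0 u
      obtain ⟨halive', hple, hmin⟩ := C.pick_spec halive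
      rw [C.path_length u] at hple
      have hpickeq : pickB C.h (blist (NB n)) (C.path u) = C.pick (C.path u) := by
        rw [pickB, C.path_length u]
        apply leastB_spec
        · omega
        · have hb := hbget (NB n) (Encodable.encode (C.path u ++ [C.pick (C.path u)]))
            (hqbound u _ n (by omega) (by omega))
          rw [hb, (hAliveBit _).2 halive']
          simp
        · intro j hj
          have hb := hbget (NB n) (Encodable.encode (C.path u ++ [j]))
            (hqbound u j n (by omega) (by omega))
          rw [hb]
          have hnal : ¬ C.Alive (C.path u ++ [j]) := hmin j hj
          have hχne : χ (Encodable.encode (C.path u ++ [j])) ≠ 0 := by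
            intro hc
            exact hnal ((hAliveBit _).1 hc)
          have h1 : (χ (Encodable.encode (C.path u ++ [j])) == 0) = false := by
            simpa using hχne
          have h2 : (j == C.h u + 1) = false := by simp; omega
          rw [h1, h2]
          rfl
      rw [hpickeq]
  have hsim : ∀ n,
      gvalB C.h (Nat.pair n (Encodable.encode (blist (NB n)))) = C.limit n := by
    intro n
    rw [gvalB, Nat.unpair_pair]
    simp only [Encodable.encodek, Option.getD_some]
    rw [hsimpath n (n+1) le_rfl]
    exact C.path_getD (by omega)
  -- oracle computation of χ
  have hχm : RecInO O (fun e => Part.some (χ e)) := by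
    have := RecInO.comp (RecInO.oracle (O := O)) (RecInO.of_computable hkDc)
    refine this.of_eq fun e => ?_
    refine (Part.bind_some (kD e) O).trans ?_
    exact hχdef e
  -- oracle computation of the bit table via primitive recursion
  have hcg : RecInO O (fun z =>
      Part.some (Nat.pair (χ z.unpair.2.unpair.1) z.unpair.2.unpair.2 + 1)) := by
    have h1 : RecInO O (fun z => Part.some (χ (z.unpair.2.unpair.1))) :=
      RecInO.totalComp hχm (RecInO.of_computable
        (Computable.fst.comp (Computable.unpair.comp (Computable.snd.comp Computable.unpair))))
    have h2 : RecInO O (fun z => Part.some (z.unpair.2.unpair.2)) :=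
      RecInO.of_computable
        (Computable.snd.comp (Computable.unpair.comp (Computable.snd.comp Computable.unpair)))
    exact RecInO.totalComp (RecInO.of_computable Computable.succ) (RecInO.totalPair h1 h2)
  have hbits : RecInO O (fun z => Part.some (Encodable.encode (blist z.unpair.2))) := by
    have hcf : RecInO O ((fun _ => Part.some 0 : ℕ →. ℕ)) :=
      RecInO.of_computable (Computable.const 0)
    have hprec := RecInO.prec hcf hcg
    have key : ∀ a n : ℕ,
        (Nat.rec (motive := fun _ => Part ℕ) ((fun _ => Part.some 0 : ℕ →. ℕ) a)
          (fun y IH => IH >>= fun i =>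
            Part.some (Nat.pair (χ (Nat.pair a (Nat.pair y i)).unpair.2.unpair.1)
              (Nat.pair a (Nat.pair y i)).unpair.2.unpair.2 + 1)) n)
          = Part.some (Encodable.encode (blist n)) := by
      intro a n
      induction n with
      | zero => rfl
      | succ m ih =>
        have hred : (Nat.rec (motive := fun _ => Part ℕ)
            ((fun _ => Part.some 0 : ℕ →. ℕ) a)
            (fun y IH => IH >>= fun i =>
              Part.some (Nat.pair (χ (Nat.pair a (Nat.pair y i)).unpair.2.unpair.1)
                (Nat.pair a (Nat.pair y i)).unpair.2.unpair.2 + 1)) (m+1))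
            = (Nat.rec (motive := fun _ => Part ℕ)
              ((fun _ => Part.some 0 : ℕ →. ℕ) a)
              (fun y IH => IH >>= fun i =>
                Part.some (Nat.pair (χ (Nat.pair a (Nat.pair y i)).unpair.2.unpair.1)
                  (Nat.pair a (Nat.pair y i)).unpair.2.unpair.2 + 1)) m) >>= fun i =>
                Part.some (Nat.pair (χ (Nat.pair a (Nat.pair m i)).unpair.2.unpair.1)
                  (Nat.pair a (Nat.pair m i)).unpair.2.unpair.2 + 1) := rfl
        rw [hred, ih]
        have hcons : blist (m+1) = χ m :: blist m := rfl
        rw [hcons]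
        simp [Nat.unpair_pair, Encodable.encode_list_cons, Encodable.encode_nat]
    refine hprec.of_eq fun z => ?_
    exact key z.unpair.1 z.unpair.2
  have hbits2 : RecInO O (fun n => Part.some (Encodable.encode (blist (NB n)))) := by
    have hc : Computable fun n : ℕ => Nat.pair 0 (NB n) :=
      Primrec₂.natPair.to_comp.comp (Computable.const 0) hNBc
    refine (RecInO.totalComp hbits (RecInO.of_computable hc)).of_eq fun n => ?_
    rw [Nat.unpair_pair]
  have hfinal := RecInO.totalComp (RecInO.of_computable (cGvalB hh))
    (RecInO.totalPair (RecInO.of_computable Computable.id) hbits2)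
  exact hfinal.of_eq fun n => congrArg Part.some (hsim n)

end Ctx
-- ===== Part 6: helpers and the main theorem =====

theorem boolEqOfIff {a b : Bool} (h : a = true ↔ b = true) : a = b := by
  cases a <;> cases b <;> simp_all

/-- If `f` is an isomorphism between computable structures `A` and `B` such that
both `f` and its inverse are dominated by a computable function `h`, then there is
an isomorphism from `A` to `B` computable from the halting set `∅′`. -/
theorem exists_halting_computable_iso_of_dominated_iso
    (L : CompLanguage) (A B : CompStruc L) (f finv : ℕ → ℕ)
    (hf : IsIsom A.toStruc B.toStruc f)
    (hinv : ∀ x ∈ A.dom, finv (f x) = x)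
    (hinv' : ∀ y ∈ B.dom, finv y ∈ A.dom ∧ f (finv y) = y)
    (h : ℕ → ℕ) (hh : Computable h)
    (hdomf : ∀ n, f n ≤ h n) (hdomi : ∀ n, finv n ≤ h n) :
    ∃ g : ℕ → ℕ, IsIsom A.toStruc B.toStruc g ∧ FunTLE g haltingSet := by
  classical
  obtain ⟨rA, hrAc, hrAspec⟩ := A.rels_computable
  obtain ⟨rB, hrBc, hrBspec⟩ := B.rels_computable
  by_cases hA : ∀ n, n ∈ A.dom
  · -- infinite case: both domains are all of ℕ
    have hAu : A.dom = Set.univ := Set.eq_univ_of_forall hA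
    have hinj : Function.Injective f := by
      rw [← Set.injOn_univ]
      rw [← hAu]
      exact hf.bijOn.injOn
    have hBu : B.dom = Set.univ := by
      apply Set.eq_univ_of_forall
      intro y
      by_contra hy
      have hsub : B.dom ⊆ Set.Iio y := by
        intro z hz
        by_contra hzy
        exact hy (B.dom_initial y z (by simpa using hzy) hz)
      have hfin : (f '' Set.univ).Finite := by
        apply Set.Finite.subset ((Set.finite_Iio y).subset hsub)
        intro w hw
        obtain ⟨x, -, rfl⟩ := hw
        exact hf.bijOn.mapsTo (hA x)
      have : (Set.univ : Set ℕ).Finite :=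
        Set.Finite.of_finite_image hfin (hinj.injOn)
      exact Set.infinite_univ this
    set C : Ctx := ⟨h, A.funcs, B.funcs, rA, rB, L.funcArity, L.relArity⟩ with hC
    have hrel : ∀ i k, C.arr i = some k → ∀ xs : List ℕ, xs.length = k →
        C.rA i xs = C.rB i (xs.map f) := by
      intro i k hk xs hlen
      apply boolEqOfIff
      rw [← hrAspec, ← hrBspec]
      exact hf.map_rels i k hk xs hlen fun x _ => hA x
    have hfunp : ∀ i k, C.arf i = some k → ∀ xs : List ℕ, xs.length = k →
        f (C.FA i xs) = C.FB i (xs.map f) := by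
      intro i k hk xs hlen
      exact hf.map_funcs i k hk xs hlen fun x _ => hA x
    have h0 : C.Alive [] :=
      C.alive_nil_of_iso f finv hdomf hinj
        (fun y => ⟨hdomi y, (hinv' y (by rw [hBu]; trivial)).2⟩) hrel hfunp
    refine ⟨C.limit, ?_, ?_⟩
    · constructor
      · rw [hAu, hBu]
        refine ⟨fun x _ => trivial, (C.limit_inj h0).injOn, ?_⟩
        intro y _
        obtain ⟨x, -, hx⟩ := C.limit_surj h0 y
        exact ⟨x, trivial, hx⟩
      · intro i k hk xs hlen _
        exact C.limit_func h0 i k hk xs hlen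
      · intro i k hk xs hlen _
        rw [hrAspec, hrBspec]
        rw [show rA i xs = rB i (xs.map C.limit) from C.limit_rel h0 i k hk xs hlen]
    · exact C.limit_recInO hh A.funcs_computable B.funcs_computable hrAc hrBc
        L.funcArity_computable L.relArity_computable h0
  · -- finite case: the domain is an initial segment {0, ..., N-1}
    push_neg at hA
    have hEx : ∃ n, n ∉ A.dom := hA
    set N := Nat.find hEx with hN
    have hdomiff : ∀ x, x ∈ A.dom ↔ x < N := by
      intro x
      constructor
      · intro hx
        by_contra hxN
        exact Nat.find_spec hEx (A.dom_initial N x (by omega) hx)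
      · intro hx
        have := Nat.find_min hEx hx
        exact not_not.1 this
    set gl : List ℕ := (List.range N).map f with hgl
    set g : ℕ → ℕ := fun x => gl.getD x x with hg
    have hgf : ∀ x ∈ A.dom, g x = f x := by
      intro x hx
      have hxN : x < N := (hdomiff x).1 hx
      have hlen : x < gl.length := by simp [hgl]; omega
      rw [hg]
      simp only []
      rw [List.getD_eq_getElem _ _ hlen]
      simp [hgl]
    refine ⟨g, ?_, ?_⟩
    · constructor
      · exact hf.bijOn.congr fun x hx => (hgf x hx).symm
      · intro i k hk xs hlen hdom
        have hAf : A.funcs i xs ∈ A.dom := A.funcs_closed i k hk xs hlen hdom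
        rw [hgf _ hAf, hf.map_funcs i k hk xs hlen hdom]
        congr 1
        exact List.map_congr_left fun x hx => (hgf x (hdom x hx)).symm
      · intro i k hk xs hlen hdom
        rw [hf.map_rels i k hk xs hlen hdom]
        have : xs.map f = xs.map g :=
          List.map_congr_left fun x hx => (hgf x (hdom x hx)).symm
        rw [this]
    · apply RecInO.of_computable
      have : Computable fun x : ℕ => (gl[x]?).getD x :=
        Primrec.option_getD.to_comp.comp
          (Computable.list_getElem?.comp (Computable.const gl) Computable.id) Computable.id
      exact this.of_eq fun x => by rw [hg]; simp only []; rw [List.getD_eq_getElem?_getD]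
end
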